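/- arXiv:2311.07596 — 2 statements merged into one kernel-verified Lean document; each statement's English description precedes it below -/
import Mathlib

section
/- For 1 ≤ p < ∞, c > 0, ε > 0 and base metric d, the graph GOSPA distance d^{(c,ε)} and its LP relaxation d̄^{(c,ε)} are metrics on the space of weighted undirected graphs (with possible self-loops), i.e., graphs whose adjacency matrices are symmetric real matrices with nonzero weights on edges: each of the two functions satisfies identity (distance zero iff equal graphs), symmetry, and the triangle inequality. -/
open scoped BigOperators Matrix

namespace GraphGOSPA

/-- A weighted undirected graph (with possible self-loops) with node attributes in a
metric space `𝕏`: a finite list of distinct nodes together with a symmetric real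
adjacency matrix; `A i j ≠ 0` exactly when there is an edge of weight `A i j`
between nodes `i` and `j`. -/
structure WGraph (𝕏 : Type*) [MetricSpace 𝕏] where
  n : ℕ
  nodes : Fin n → 𝕏
  nodes_inj : Function.Injective nodes
  A : Matrix (Fin n) (Fin n) ℝ
  A_symm : A.IsSymm

variable {𝕏 : Type*} [MetricSpace 𝕏]

/-- Componentwise 1-norm of a matrix. -/
def onorm {m n : ℕ} (M : Matrix (Fin m) (Fin n) ℝ) : ℝ :=
  ∑ i, ∑ j, |M i j|

/-- The top-left `m × n` block of an `(m+1) × (n+1)` matrix. -/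
def topLeft {m n : ℕ} (W : Matrix (Fin (m+1)) (Fin (n+1)) ℝ) :
    Matrix (Fin m) (Fin n) ℝ :=
  fun i j => W i.castSucc j.castSucc

/-- The set `𝒲_{X,Y}` of binary assignment matrices: entries in `{0,1}`,
each of the first `nY` columns sums to 1, each of the first `nX` rows sums to 1,
and the bottom-right corner is 0. -/
def Wset (nX nY : ℕ) : Set (Matrix (Fin (nX+1)) (Fin (nY+1)) ℝ) :=
  {W | (∀ i j, W i j = 0 ∨ W i j = 1) ∧
    (∀ j : Fin nY, ∑ i, W i j.castSucc = 1) ∧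
    (∀ i : Fin nX, ∑ j, W i.castSucc j = 1) ∧
    W (Fin.last nX) (Fin.last nY) = 0}

/-- The relaxed set `𝒲̄_{X,Y}`: nonnegative entries, with the same row/column sum
constraints and zero bottom-right corner. -/
def WbarSet (nX nY : ℕ) : Set (Matrix (Fin (nX+1)) (Fin (nY+1)) ℝ) :=
  {W | (∀ i j, 0 ≤ W i j) ∧
    (∀ j : Fin nY, ∑ i, W i j.castSucc = 1) ∧
    (∀ i : Fin nX, ∑ j, W i.castSucc j = 1) ∧
    W (Fin.last nX) (Fin.last nY) = 0}

/-- The cost matrix `D_{X,Y}`. -/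
noncomputable def Dmat (p c : ℝ) (X Y : WGraph 𝕏) :
    Matrix (Fin (X.n+1)) (Fin (Y.n+1)) ℝ :=
  fun i j =>
    if hi : (i : ℕ) < X.n then
      if hj : (j : ℕ) < Y.n then dist (X.nodes ⟨i, hi⟩) (Y.nodes ⟨j, hj⟩) ^ p
      else c ^ p / 2
    else if (j : ℕ) < Y.n then c ^ p / 2 else 0

/-- The graph GOSPA objective `tr[D_{X,Y}ᵀ W] + (ε^p/2) ‖A_X W' − W' A_Y‖`. -/
noncomputable def obj (p c ε : ℝ) (X Y : WGraph 𝕏)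
    (W : Matrix (Fin (X.n+1)) (Fin (Y.n+1)) ℝ) : ℝ :=
  Matrix.trace ((Dmat p c X Y)ᵀ * W) +
    ε ^ p / 2 * onorm (X.A * topLeft W - topLeft W * Y.A)

/-- The graph GOSPA distance (minimum over binary assignment matrices). -/
noncomputable def gospa (p c ε : ℝ) (X Y : WGraph 𝕏) : ℝ :=
  sInf {v | ∃ W ∈ Wset X.n Y.n, v = obj p c ε X Y W} ^ (1 / p)

/-- The LP graph GOSPA distance (minimum over relaxed assignment matrices). -/
noncomputable def gospaLP (p c ε : ℝ) (X Y : WGraph 𝕏) : ℝ :=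
  sInf {v | ∃ W ∈ WbarSet X.n Y.n, v = obj p c ε X Y W} ^ (1 / p)

/-- The node set of a weighted graph. -/
def nodeSet (X : WGraph 𝕏) : Set 𝕏 := Set.range X.nodes

/-- The weighted edge set of a weighted graph: unordered pairs of node attributes
together with the (nonzero) weight of the corresponding edge. -/
def wEdgeSet (X : WGraph 𝕏) : Set (Sym2 𝕏 × ℝ) :=
  {e | ∃ i j, X.A i j ≠ 0 ∧ e = (s(X.nodes i, X.nodes j), X.A i j)}

/-- Two weighted graphs are equal when they have the same node set and the same
weighted edge set. -/
def WGraphEq (X Y : WGraph 𝕏) : Prop :=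
  nodeSet X = nodeSet Y ∧ wEdgeSet X = wEdgeSet Y

/-! ### Auxiliary lemmas -/

section Aux

lemma onorm_nonneg {m n : ℕ} (M : Matrix (Fin m) (Fin n) ℝ) : 0 ≤ onorm M :=
  Finset.sum_nonneg fun _ _ => Finset.sum_nonneg fun _ _ => abs_nonneg _

lemma onorm_eq_zero {m n : ℕ} {M : Matrix (Fin m) (Fin n) ℝ} (h : onorm M = 0) :
    M = 0 := by
  ext i j
  have h1 : ∀ i ∈ Finset.univ, (0:ℝ) ≤ ∑ j, |M i j| :=
    fun _ _ => Finset.sum_nonneg fun _ _ => abs_nonneg _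
  have h2 := (Finset.sum_eq_zero_iff_of_nonneg h1).mp h i (Finset.mem_univ i)
  have h3 := (Finset.sum_eq_zero_iff_of_nonneg
    (fun j _ => abs_nonneg (M i j))).mp h2 j (Finset.mem_univ j)
  simpa using abs_eq_zero.mp h3

lemma onorm_transpose {m n : ℕ} (M : Matrix (Fin m) (Fin n) ℝ) :
    onorm Mᵀ = onorm M := by
  unfold onorm; rw [Finset.sum_comm]; rfl

lemma onorm_neg {m n : ℕ} (M : Matrix (Fin m) (Fin n) ℝ) :
    onorm (-M) = onorm M := by
  unfold onorm
  refine Finset.sum_congr rfl fun i _ => Finset.sum_congr rfl fun j _ => ?_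
  simp [abs_neg]

/-- `a^p + b^p ≤ (a+b)^p` for nonnegative reals and `p ≥ 1`. -/
lemma add_rpow_le {p a b : ℝ} (ha : 0 ≤ a) (hb : 0 ≤ b) (hp : 1 ≤ p) :
    a ^ p + b ^ p ≤ (a + b) ^ p := by
  lift a to NNReal using ha
  lift b to NNReal using hb
  have := NNReal.add_rpow_le_rpow_add a b hp
  exact_mod_cast this

/-- A nonnegative row with entries in `{0,1}` summing to `1` has a unique `1`. -/
lemma binary_row_unique {m : ℕ} {f : Fin m → ℝ}
    (hb : ∀ k, f k = 0 ∨ f k = 1) (hs : ∑ k, f k = 1) :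
    ∃ k0, f k0 = 1 ∧ ∀ k, k ≠ k0 → f k = 0 := by
  have hex : ∃ k0, f k0 = 1 := by
    by_contra h
    push_neg at h
    have : ∀ k ∈ Finset.univ, f k = 0 := fun k _ => (hb k).resolve_right (h k)
    rw [Finset.sum_eq_zero this] at hs; norm_num at hs
  obtain ⟨k0, hk0⟩ := hex
  refine ⟨k0, hk0, fun k hk => ?_⟩
  have hrest : ∑ x ∈ Finset.univ.erase k0, f x = 0 := by
    have := Finset.add_sum_erase Finset.univ f (Finset.mem_univ k0)
    rw [hs, hk0] at this; linarith
  have hnn : ∀ x ∈ Finset.univ.erase k0, (0:ℝ) ≤ f x := by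
    intro x _; rcases hb x with h | h <;> rw [h] <;> norm_num
  exact (Finset.sum_eq_zero_iff_of_nonneg hnn).mp hrest k
    (Finset.mem_erase.mpr ⟨hk, Finset.mem_univ k⟩)

variable {𝕏 : Type*} [MetricSpace 𝕏]

lemma Dmat_cc (p c : ℝ) (X Y : WGraph 𝕏) (i : Fin X.n) (j : Fin Y.n) :
    Dmat p c X Y i.castSucc j.castSucc = dist (X.nodes i) (Y.nodes j) ^ p := by
  have hi : ((i.castSucc : Fin (X.n+1)) : ℕ) < X.n := by simp
  have hj : ((j.castSucc : Fin (Y.n+1)) : ℕ) < Y.n := by simp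
  simp only [Dmat, dif_pos hi, dif_pos hj]
  have h1 : (⟨((i.castSucc : Fin (X.n+1)) : ℕ), hi⟩ : Fin X.n) = i := Fin.ext (by simp)
  have h2 : (⟨((j.castSucc : Fin (Y.n+1)) : ℕ), hj⟩ : Fin Y.n) = j := Fin.ext (by simp)
  rw [h1, h2]

lemma Dmat_cl (p c : ℝ) (X Y : WGraph 𝕏) (i : Fin X.n) :
    Dmat p c X Y i.castSucc (Fin.last Y.n) = c ^ p / 2 := by
  have hi : ((i.castSucc : Fin (X.n+1)) : ℕ) < X.n := by simp
  simp [Dmat, dif_pos hi]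

lemma Dmat_lc (p c : ℝ) (X Y : WGraph 𝕏) (j : Fin Y.n) :
    Dmat p c X Y (Fin.last X.n) j.castSucc = c ^ p / 2 := by
  simp [Dmat]

lemma Dmat_ll (p c : ℝ) (X Y : WGraph 𝕏) :
    Dmat p c X Y (Fin.last X.n) (Fin.last Y.n) = 0 := by
  simp [Dmat]

/-- Explicit expansion of the objective. -/
lemma obj_eq (p c ε : ℝ) (X Y : WGraph 𝕏)
    (W : Matrix (Fin (X.n+1)) (Fin (Y.n+1)) ℝ) :
    obj p c ε X Y W =
      (∑ i : Fin X.n, ∑ j : Fin Y.n,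
          dist (X.nodes i) (Y.nodes j) ^ p * W i.castSucc j.castSucc)
      + c ^ p / 2 * (∑ i : Fin X.n, W i.castSucc (Fin.last Y.n))
      + c ^ p / 2 * (∑ j : Fin Y.n, W (Fin.last X.n) j.castSucc)
      + ε ^ p / 2 * onorm (X.A * topLeft W - topLeft W * Y.A) := by
  have htr : Matrix.trace ((Dmat p c X Y)ᵀ * W) =
      ∑ j : Fin (Y.n+1), ∑ i : Fin (X.n+1), Dmat p c X Y i j * W i j := by
    simp [Matrix.trace, Matrix.diag, Matrix.mul_apply, Matrix.transpose_apply]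
  unfold obj
  rw [htr, Fin.sum_univ_castSucc (n := Y.n)]
  simp only [Fin.sum_univ_castSucc (n := X.n)]
  simp only [Dmat_cc, Dmat_cl, Dmat_lc, Dmat_ll]
  rw [Finset.sum_add_distrib, Finset.sum_comm, ← Finset.mul_sum, ← Finset.mul_sum]
  ring

lemma Wset_subset {nX nY : ℕ} : Wset nX nY ⊆ WbarSet nX nY := by
  rintro W ⟨hb, h1, h2, h3⟩
  refine ⟨fun i j => ?_, h1, h2, h3⟩
  rcases hb i j with h | h <;> rw [h] <;> norm_num

lemma wbar_sum_row_le {nX nY : ℕ} {W : Matrix (Fin (nX+1)) (Fin (nY+1)) ℝ}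
    (hW : W ∈ WbarSet nX nY) (i : Fin nX) :
    ∑ j : Fin nY, W i.castSucc j.castSucc ≤ 1 := by
  obtain ⟨hnn, _, h2, _⟩ := hW
  have := h2 i
  rw [Fin.sum_univ_castSucc] at this
  have := hnn i.castSucc (Fin.last nY)
  linarith

lemma wbar_sum_col_le {nX nY : ℕ} {W : Matrix (Fin (nX+1)) (Fin (nY+1)) ℝ}
    (hW : W ∈ WbarSet nX nY) (j : Fin nY) :
    ∑ i : Fin nX, W i.castSucc j.castSucc ≤ 1 := by
  obtain ⟨hnn, h1, _, _⟩ := hW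
  have := h1 j
  rw [Fin.sum_univ_castSucc] at this
  have := hnn (Fin.last nX) j.castSucc
  linarith

lemma wbar_entry_le_one {nX nY : ℕ} {W : Matrix (Fin (nX+1)) (Fin (nY+1)) ℝ}
    (hW : W ∈ WbarSet nX nY) (i : Fin (nX+1)) (j : Fin (nY+1)) :
    W i j ≤ 1 := by
  obtain ⟨hnn, h1, h2, h3⟩ := hW
  rcases Fin.eq_castSucc_or_eq_last j with ⟨j', rfl⟩ | rfl
  · calc W i j'.castSucc ≤ ∑ i', W i' j'.castSucc :=
          Finset.single_le_sum (fun i' _ => hnn i' j'.castSucc) (Finset.mem_univ i)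
      _ = 1 := h1 j'
  · rcases Fin.eq_castSucc_or_eq_last i with ⟨i', rfl⟩ | rfl
    · calc W i'.castSucc (Fin.last nY) ≤ ∑ j', W i'.castSucc j' :=
            Finset.single_le_sum (fun j' _ => hnn i'.castSucc j') (Finset.mem_univ _)
        _ = 1 := h2 i'
    · rw [h3]; norm_num

variable {𝕏 : Type*} [MetricSpace 𝕏]

lemma obj_nonneg {p c ε : ℝ} (hp : 0 < p) (hc : 0 ≤ c) (hε : 0 ≤ ε)
    (X Y : WGraph 𝕏) {W : Matrix (Fin (X.n+1)) (Fin (Y.n+1)) ℝ}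
    (hW : ∀ i j, 0 ≤ W i j) : 0 ≤ obj p c ε X Y W := by
  rw [obj_eq]
  have hcp : (0:ℝ) ≤ c ^ p / 2 := by positivity
  have hep : (0:ℝ) ≤ ε ^ p / 2 := by positivity
  have h1 : (0:ℝ) ≤ ∑ i : Fin X.n, ∑ j : Fin Y.n,
      dist (X.nodes i) (Y.nodes j) ^ p * W i.castSucc j.castSucc := by
    refine Finset.sum_nonneg fun i _ => Finset.sum_nonneg fun j _ => ?_
    have : (0:ℝ) ≤ dist (X.nodes i) (Y.nodes j) ^ p := Real.rpow_nonneg dist_nonneg _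
    exact mul_nonneg this (hW _ _)
  have h2 : (0:ℝ) ≤ ∑ i : Fin X.n, W i.castSucc (Fin.last Y.n) :=
    Finset.sum_nonneg fun i _ => hW _ _
  have h3 : (0:ℝ) ≤ ∑ j : Fin Y.n, W (Fin.last X.n) j.castSucc :=
    Finset.sum_nonneg fun j _ => hW _ _
  have h4 := onorm_nonneg (X.A * topLeft W - topLeft W * Y.A)
  have := mul_nonneg hcp h2
  have := mul_nonneg hcp h3
  have := mul_nonneg hep h4
  linarith

/-- The default assignment: everything unassigned. -/
def W0 (nX nY : ℕ) : Matrix (Fin (nX+1)) (Fin (nY+1)) ℝ :=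
  fun i j =>
    if (i : ℕ) < nX then (if (j : ℕ) < nY then 0 else 1)
    else (if (j : ℕ) < nY then 1 else 0)

lemma W0_mem (nX nY : ℕ) : W0 nX nY ∈ Wset nX nY := by
  refine ⟨fun i j => ?_, fun j => ?_, fun i => ?_, ?_⟩
  · unfold W0; split <;> split <;> simp
  · rw [Fin.sum_univ_castSucc]
    have h1 : ∀ i : Fin nX, W0 nX nY i.castSucc j.castSucc = 0 := by
      intro i; simp [W0, i.is_lt, j.is_lt]
    have h2 : W0 nX nY (Fin.last nX) j.castSucc = 1 := by
      simp [W0, j.is_lt]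
    rw [Finset.sum_congr rfl (fun i _ => h1 i), h2, Finset.sum_const_zero, zero_add]
  · rw [Fin.sum_univ_castSucc]
    have h1 : ∀ j : Fin nY, W0 nX nY i.castSucc j.castSucc = 0 := by
      intro j; simp [W0, i.is_lt, j.is_lt]
    have h2 : W0 nX nY i.castSucc (Fin.last nY) = 1 := by
      simp [W0, i.is_lt]
    rw [Finset.sum_congr rfl (fun j _ => h1 j), h2, Finset.sum_const_zero, zero_add]
  · simp [W0]

lemma onorm_mul_le_right {a b d : ℕ} (M : Matrix (Fin a) (Fin b) ℝ)
    {N : Matrix (Fin b) (Fin d) ℝ} (hN : ∀ k j, 0 ≤ N k j)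
    (hrow : ∀ k, ∑ j, N k j ≤ 1) : onorm (M * N) ≤ onorm M := by
  unfold onorm
  have step1 : ∀ i : Fin a, ∑ j, |(M * N) i j| ≤ ∑ k, |M i k| := by
    intro i
    have h1 : ∀ j, |(M * N) i j| ≤ ∑ k, |M i k| * N k j := by
      intro j
      rw [Matrix.mul_apply]
      refine (Finset.abs_sum_le_sum_abs _ _).trans ?_
      refine Finset.sum_le_sum fun k _ => ?_
      rw [abs_mul, abs_of_nonneg (hN k j)]
    calc ∑ j, |(M * N) i j| ≤ ∑ j, ∑ k, |M i k| * N k j :=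
          Finset.sum_le_sum fun j _ => h1 j
      _ = ∑ k, |M i k| * ∑ j, N k j := by
          rw [Finset.sum_comm]
          exact Finset.sum_congr rfl fun k _ => by rw [← Finset.mul_sum]
      _ ≤ ∑ k, |M i k| := by
          refine Finset.sum_le_sum fun k _ => ?_
          exact mul_le_of_le_one_right (abs_nonneg _) (hrow k)
  exact Finset.sum_le_sum fun i _ => step1 i

lemma onorm_mul_le_left {a b d : ℕ} {M : Matrix (Fin a) (Fin b) ℝ}
    (N : Matrix (Fin b) (Fin d) ℝ) (hM : ∀ i k, 0 ≤ M i k)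
    (hcol : ∀ k, ∑ i, M i k ≤ 1) : onorm (M * N) ≤ onorm N := by
  have h1 : onorm (M * N) = onorm ((M * N)ᵀ) := (onorm_transpose _).symm
  rw [h1, Matrix.transpose_mul]
  calc onorm (Nᵀ * Mᵀ) ≤ onorm Nᵀ := by
        refine onorm_mul_le_right _ (fun k j => hM j k) ?_
        intro k; exact hcol k
    _ = onorm N := onorm_transpose N

lemma continuous_entry {a b : ℕ} (i : Fin a) (j : Fin b) :
    Continuous fun W : Matrix (Fin a) (Fin b) ℝ => W i j :=
  (continuous_apply j).comp (continuous_apply i)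

lemma continuous_obj (p c ε : ℝ) (X Y : WGraph 𝕏) :
    Continuous (obj p c ε X Y) := by
  have hobj : obj p c ε X Y = fun W =>
      (∑ i : Fin X.n, ∑ j : Fin Y.n,
          dist (X.nodes i) (Y.nodes j) ^ p * W i.castSucc j.castSucc)
      + c ^ p / 2 * (∑ i : Fin X.n, W i.castSucc (Fin.last Y.n))
      + c ^ p / 2 * (∑ j : Fin Y.n, W (Fin.last X.n) j.castSucc)
      + ε ^ p / 2 * onorm (X.A * topLeft W - topLeft W * Y.A) :=
    funext (obj_eq p c ε X Y)
  rw [hobj]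
  have hent : ∀ (i : Fin X.n) (j : Fin Y.n),
      Continuous fun W : Matrix (Fin (X.n+1)) (Fin (Y.n+1)) ℝ =>
        (X.A * topLeft W - topLeft W * Y.A) i j := by
    intro i j
    simp only [Matrix.sub_apply, Matrix.mul_apply, topLeft]
    exact (continuous_finset_sum _ fun k _ =>
        continuous_const.mul (continuous_entry _ _)).sub
      (continuous_finset_sum _ fun k _ =>
        (continuous_entry _ _).mul continuous_const)
  have h4 : Continuous fun W : Matrix (Fin (X.n+1)) (Fin (Y.n+1)) ℝ =>
      onorm (X.A * topLeft W - topLeft W * Y.A) := by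
    unfold onorm
    exact continuous_finset_sum _ fun i _ =>
      continuous_finset_sum _ fun j _ => (hent i j).abs
  refine Continuous.add (Continuous.add (Continuous.add ?_ ?_) ?_) ?_
  · exact continuous_finset_sum _ fun i _ => continuous_finset_sum _ fun j _ =>
      continuous_const.mul (continuous_entry _ _)
  · exact continuous_const.mul (continuous_finset_sum _ fun i _ => continuous_entry _ _)
  · exact continuous_const.mul (continuous_finset_sum _ fun j _ => continuous_entry _ _)
  · exact continuous_const.mul h4

lemma wbar_closed (nX nY : ℕ) : IsClosed (WbarSet nX nY) := by
  have h1 : IsClosed {W : Matrix (Fin (nX+1)) (Fin (nY+1)) ℝ | ∀ i j, 0 ≤ W i j} := by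
    rw [show {W : Matrix (Fin (nX+1)) (Fin (nY+1)) ℝ | ∀ i j, 0 ≤ W i j}
        = ⋂ i, ⋂ j, {W : Matrix (Fin (nX+1)) (Fin (nY+1)) ℝ | 0 ≤ W i j} by
      ext W; simp]
    exact isClosed_iInter fun i => isClosed_iInter fun j =>
      isClosed_le continuous_const (continuous_entry i j)
  have h2 : IsClosed {W : Matrix (Fin (nX+1)) (Fin (nY+1)) ℝ |
      ∀ j : Fin nY, ∑ i, W i j.castSucc = 1} := by
    rw [show {W : Matrix (Fin (nX+1)) (Fin (nY+1)) ℝ |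
        ∀ j : Fin nY, ∑ i, W i j.castSucc = 1}
        = ⋂ j : Fin nY, {W : Matrix (Fin (nX+1)) (Fin (nY+1)) ℝ |
            ∑ i, W i j.castSucc = 1} by ext W; simp]
    exact isClosed_iInter fun j => isClosed_eq
      (continuous_finset_sum _ fun i _ => continuous_entry i _) continuous_const
  have h3 : IsClosed {W : Matrix (Fin (nX+1)) (Fin (nY+1)) ℝ |
      ∀ i : Fin nX, ∑ j, W i.castSucc j = 1} := by
    rw [show {W : Matrix (Fin (nX+1)) (Fin (nY+1)) ℝ |
        ∀ i : Fin nX, ∑ j, W i.castSucc j = 1}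
        = ⋂ i : Fin nX, {W : Matrix (Fin (nX+1)) (Fin (nY+1)) ℝ |
            ∑ j, W i.castSucc j = 1} by ext W; simp]
    exact isClosed_iInter fun i => isClosed_eq
      (continuous_finset_sum _ fun j _ => continuous_entry _ j) continuous_const
  have h4 : IsClosed {W : Matrix (Fin (nX+1)) (Fin (nY+1)) ℝ |
      W (Fin.last nX) (Fin.last nY) = 0} :=
    isClosed_eq (continuous_entry _ _) continuous_const
  have : WbarSet nX nY = _ ∩ (_ ∩ (_ ∩ _)) :=
    rfl
  exact h1.inter (h2.inter (h3.inter h4))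

lemma wbar_compact (nX nY : ℕ) : IsCompact (WbarSet nX nY) := by
  have hbox : IsCompact (Set.univ.pi fun _ : Fin (nX+1) =>
      (Set.univ.pi fun _ : Fin (nY+1) => Set.Icc (0:ℝ) 1)) :=
    isCompact_univ_pi fun i => isCompact_univ_pi fun j => isCompact_Icc
  refine hbox.of_isClosed_subset (wbar_closed nX nY) ?_
  intro W hW
  have hnn := hW.1
  intro i _
  intro j _
  exact ⟨hnn i j, wbar_entry_le_one hW i j⟩

lemma wset_closed (nX nY : ℕ) : IsClosed (Wset nX nY) := by
  have h1 : IsClosed {W : Matrix (Fin (nX+1)) (Fin (nY+1)) ℝ |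
      ∀ i j, W i j = 0 ∨ W i j = 1} := by
    rw [show {W : Matrix (Fin (nX+1)) (Fin (nY+1)) ℝ | ∀ i j, W i j = 0 ∨ W i j = 1}
        = ⋂ i, ⋂ j, {W : Matrix (Fin (nX+1)) (Fin (nY+1)) ℝ |
            W i j ∈ ({0, 1} : Set ℝ)} by
      ext W; simp [Set.mem_setOf_eq]]
    refine isClosed_iInter fun i => isClosed_iInter fun j => ?_
    have : ({0, 1} : Set ℝ) = {0} ∪ {1} := rfl
    exact IsClosed.preimage (continuous_entry i j)
      (this ▸ isClosed_singleton.union isClosed_singleton)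
  have hrest := wbar_closed nX nY
  -- Wset = {binary} ∩ (rest of WbarSet conditions); note Wset ⊆ WbarSet.
  have : Wset nX nY = {W : Matrix (Fin (nX+1)) (Fin (nY+1)) ℝ |
      ∀ i j, W i j = 0 ∨ W i j = 1} ∩ WbarSet nX nY := by
    ext W
    constructor
    · intro h; exact ⟨h.1, Wset_subset h⟩
    · rintro ⟨hb, _, h1, h2, h3⟩; exact ⟨hb, h1, h2, h3⟩
  rw [this]
  exact h1.inter hrest

lemma wset_compact (nX nY : ℕ) : IsCompact (Wset nX nY) :=
  (wbar_compact nX nY).of_isClosed_subset (wset_closed nX nY) Wset_subset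

/-- Existence of a minimizer realising the infimum. -/
lemma sInf_spec {M : Type*} [TopologicalSpace M] {S : Set M} (hS : IsCompact S)
    (hne : S.Nonempty) {f : M → ℝ} (hf : Continuous f) :
    ∃ W ∈ S, sInf {v | ∃ W' ∈ S, v = f W'} = f W ∧ ∀ W' ∈ S, f W ≤ f W' := by
  obtain ⟨W, hWS, hmin⟩ := hS.exists_isMinOn hne hf.continuousOn
  have hmin' : ∀ W' ∈ S, f W ≤ f W' := fun W' h => hmin h
  refine ⟨W, hWS, le_antisymm ?_ ?_, hmin'⟩
  · exact csInf_le ⟨f W, by rintro v ⟨W', hW', rfl⟩; exact hmin' W' hW'⟩ ⟨W, hWS, rfl⟩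
  · exact le_csInf ⟨f W, W, hWS, rfl⟩ (by rintro v ⟨W', hW', rfl⟩; exact hmin' W' hW')

lemma csInf_le_of_mem {S : Set ℝ} (hlb : ∀ v ∈ S, (0:ℝ) ≤ v) {v : ℝ} (hv : v ∈ S) :
    sInf S ≤ v :=
  csInf_le ⟨0, hlb⟩ hv

/-! ### Symmetry -/

lemma Dmat_transpose (p c : ℝ) (X Y : WGraph 𝕏) :
    Dmat p c Y X = (Dmat p c X Y)ᵀ := by
  ext i j
  simp only [Matrix.transpose_apply, Dmat]
  by_cases hi : (i : ℕ) < Y.n <;> by_cases hj : (j : ℕ) < X.n <;>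
    simp [hi, hj, dist_comm]

lemma topLeft_transpose {m n : ℕ} (W : Matrix (Fin (m+1)) (Fin (n+1)) ℝ) :
    topLeft Wᵀ = (topLeft W)ᵀ := rfl

lemma transpose_mem_wbar {nX nY : ℕ} {W : Matrix (Fin (nX+1)) (Fin (nY+1)) ℝ}
    (hW : W ∈ WbarSet nX nY) : Wᵀ ∈ WbarSet nY nX := by
  obtain ⟨hnn, h1, h2, h3⟩ := hW
  exact ⟨fun i j => hnn j i, fun j => h2 j, fun i => h1 i, h3⟩

lemma transpose_mem_wset {nX nY : ℕ} {W : Matrix (Fin (nX+1)) (Fin (nY+1)) ℝ}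
    (hW : W ∈ Wset nX nY) : Wᵀ ∈ Wset nY nX := by
  obtain ⟨hb, h1, h2, h3⟩ := hW
  exact ⟨fun i j => hb j i, fun j => h2 j, fun i => h1 i, h3⟩

lemma obj_transpose (p c ε : ℝ) (X Y : WGraph 𝕏)
    (W : Matrix (Fin (X.n+1)) (Fin (Y.n+1)) ℝ) :
    obj p c ε Y X Wᵀ = obj p c ε X Y W := by
  unfold obj
  have htr : Matrix.trace ((Dmat p c Y X)ᵀ * Wᵀ) =
      Matrix.trace ((Dmat p c X Y)ᵀ * W) := by
    rw [Dmat_transpose, Matrix.transpose_transpose, Matrix.trace_mul_comm,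
      ← Matrix.trace_transpose, Matrix.transpose_mul, Matrix.transpose_transpose]
  have hedge : onorm (Y.A * topLeft Wᵀ - topLeft Wᵀ * X.A) =
      onorm (X.A * topLeft W - topLeft W * Y.A) := by
    rw [topLeft_transpose]
    have key : Y.A * (topLeft W)ᵀ - (topLeft W)ᵀ * X.A =
        -((X.A * topLeft W - topLeft W * Y.A)ᵀ) := by
      rw [Matrix.transpose_sub, Matrix.transpose_mul, Matrix.transpose_mul,
        X.A_symm.eq, Y.A_symm.eq, neg_sub]
    rw [key, onorm_neg, onorm_transpose]
  rw [htr, hedge]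

/-! ### Identity: construction from graph equality -/

/-- Permutation assignment matrix. -/
def permW {nX nY : ℕ} (σ : Fin nX → Fin nY) :
    Matrix (Fin (nX+1)) (Fin (nY+1)) ℝ :=
  fun i j =>
    if hi : (i : ℕ) < nX then
      (if hj : (j : ℕ) < nY then (if σ ⟨i, hi⟩ = ⟨j, hj⟩ then 1 else 0) else 0)
    else 0

lemma permW_cc {nX nY : ℕ} (σ : Fin nX → Fin nY) (i : Fin nX) (j : Fin nY) :
    permW σ i.castSucc j.castSucc = if σ i = j then 1 else 0 := by
  have hi : ((i.castSucc : Fin (nX+1)) : ℕ) < nX := by simp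
  have hj : ((j.castSucc : Fin (nY+1)) : ℕ) < nY := by simp
  simp only [permW, dif_pos hi, dif_pos hj]
  have e1 : (⟨((i.castSucc : Fin (nX+1)) : ℕ), hi⟩ : Fin nX) = i := Fin.ext (by simp)
  have e2 : (⟨((j.castSucc : Fin (nY+1)) : ℕ), hj⟩ : Fin nY) = j := Fin.ext (by simp)
  rw [e1, e2]

lemma permW_cl {nX nY : ℕ} (σ : Fin nX → Fin nY) (i : Fin (nX+1)) :
    permW σ i (Fin.last nY) = 0 := by
  unfold permW
  split
  · rw [dif_neg (by simp)]
  · rfl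

lemma permW_l {nX nY : ℕ} (σ : Fin nX → Fin nY) (j : Fin (nY+1)) :
    permW σ (Fin.last nX) j = 0 := by
  unfold permW
  rw [dif_neg (by simp)]

lemma permW_mem {nX nY : ℕ} (e : Fin nX ≃ Fin nY) :
    permW (⇑e) ∈ Wset nX nY := by
  refine ⟨fun i j => ?_, fun j => ?_, fun i => ?_, permW_l _ _⟩
  · unfold permW
    split
    · split
      · split
        · right; rfl
        · left; rfl
      · left; rfl
    · left; rfl
  · rw [Fin.sum_univ_castSucc, permW_l, add_zero]
    have : ∀ i : Fin nX, permW (⇑e) i.castSucc j.castSucc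
        = if e i = j then 1 else 0 := fun i => permW_cc _ i j
    rw [Finset.sum_congr rfl fun i _ => this i]
    rw [Fintype.sum_equiv e _ (fun k => if k = j then (1:ℝ) else 0) (fun i => rfl)]
    simp
  · rw [Fin.sum_univ_castSucc, permW_cl, add_zero]
    have : ∀ j : Fin nY, permW (⇑e) i.castSucc j.castSucc
        = if e i = j then 1 else 0 := fun j => permW_cc _ i j
    rw [Finset.sum_congr rfl fun j _ => this j]
    simp

lemma obj_permW_zero {p c ε : ℝ} (hp : 0 < p) (X Y : WGraph 𝕏)
    (e : Fin X.n ≃ Fin Y.n) (hnodes : ∀ i, X.nodes i = Y.nodes (e i))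
    (hA : ∀ i k, X.A i k = Y.A (e i) (e k)) :
    obj p c ε X Y (permW (⇑e)) = 0 := by
  rw [obj_eq]
  have hT1 : (∑ i : Fin X.n, ∑ j : Fin Y.n,
      dist (X.nodes i) (Y.nodes j) ^ p * permW (⇑e) i.castSucc j.castSucc) = 0 := by
    refine Finset.sum_eq_zero fun i _ => Finset.sum_eq_zero fun j _ => ?_
    rw [permW_cc]
    by_cases h : e i = j
    · rw [if_pos h, mul_one, ← h, ← hnodes i, dist_self, Real.zero_rpow hp.ne']
    · rw [if_neg h, mul_zero]
  have hT2 : (∑ i : Fin X.n, permW (⇑e) i.castSucc (Fin.last Y.n)) = 0 :=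
    Finset.sum_eq_zero fun i _ => permW_cl _ _
  have hT3 : (∑ j : Fin Y.n, permW (⇑e) (Fin.last X.n) j.castSucc) = 0 :=
    Finset.sum_eq_zero fun j _ => permW_l _ _
  have hT4 : X.A * topLeft (permW (⇑e)) - topLeft (permW (⇑e)) * Y.A = 0 := by
    ext i j
    simp only [Matrix.sub_apply, Matrix.mul_apply, Matrix.zero_apply]
    have htl : ∀ (k : Fin X.n) (l : Fin Y.n),
        topLeft (permW (⇑e)) k l = if e k = l then 1 else 0 := fun k l => permW_cc _ k l
    have hL : (∑ k, X.A i k * topLeft (permW (⇑e)) k j) = X.A i (e.symm j) := by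
      rw [Finset.sum_congr rfl fun k _ => by rw [htl k j]]
      have := Fintype.sum_equiv e.symm
        (fun l : Fin Y.n => if l = j then X.A i (e.symm l) else 0)
        (fun k : Fin X.n => X.A i k * if e k = j then 1 else 0)
        (fun l => by
          by_cases h : l = j
          · subst h; simp
          · simp [h, e.apply_symm_apply])
      rw [← this]
      simp
    have hR : (∑ k, topLeft (permW (⇑e)) i k * Y.A k j) = Y.A (e i) j := by
      rw [Finset.sum_congr rfl fun k _ => by rw [htl i k]]
      have : ∀ k : Fin Y.n, (if e i = k then (1:ℝ) else 0) * Y.A k j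
          = if k = e i then Y.A k j else 0 := by
        intro k; by_cases h : e i = k
        · rw [if_pos h, if_pos h.symm, one_mul]
        · rw [if_neg h, if_neg (Ne.symm h), zero_mul]
      rw [Finset.sum_congr rfl fun k _ => this k]
      simp
    rw [hL, hR, hA i (e.symm j), e.apply_symm_apply, sub_self]
  rw [hT1, hT2, hT3, hT4]
  have : onorm (0 : Matrix (Fin X.n) (Fin Y.n) ℝ) = 0 := by simp [onorm]
  rw [this]
  ring

/-- From `WGraphEq` produce a node-matching equivalence. -/
lemma equiv_of_wgraphEq {X Y : WGraph 𝕏} (h : WGraphEq X Y) :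
    ∃ e : Fin X.n ≃ Fin Y.n, (∀ i, X.nodes i = Y.nodes (e i)) ∧
      (∀ i k, X.A i k = Y.A (e i) (e k)) := by
  obtain ⟨hnodes, hedges⟩ := h
  have hmem : ∀ i, ∃ j, Y.nodes j = X.nodes i := by
    intro i
    have : X.nodes i ∈ nodeSet Y := hnodes ▸ Set.mem_range_self i
    exact this
  choose σ hσ using hmem
  have hmem' : ∀ j, ∃ i, X.nodes i = Y.nodes j := by
    intro j
    have : Y.nodes j ∈ nodeSet X := hnodes ▸ Set.mem_range_self j
    exact this
  choose τ hτ using hmem'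
  have hli : ∀ i, τ (σ i) = i := by
    intro i
    apply X.nodes_inj
    rw [hτ (σ i), hσ i]
  have hri : ∀ j, σ (τ j) = j := by
    intro j
    apply Y.nodes_inj
    rw [hσ (τ j), hτ j]
  have hsymmX : ∀ a b, X.A a b = X.A b a := by
    intro a b
    have := congrFun (congrFun X.A_symm.eq b) a
    simpa using this
  have hsymmY : ∀ a b, Y.A a b = Y.A b a := by
    intro a b
    have := congrFun (congrFun Y.A_symm.eq b) a
    simpa using this
  have hA : ∀ i k, X.A i k = Y.A (σ i) (σ k) := by
    intro i k
    by_cases hik : X.A i k = 0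
    · by_contra hne
      have hYA : Y.A (σ i) (σ k) ≠ 0 := fun h0 => hne (by rw [hik, h0])
      have hmemY : (s(Y.nodes (σ i), Y.nodes (σ k)), Y.A (σ i) (σ k)) ∈ wEdgeSet Y :=
        ⟨σ i, σ k, hYA, rfl⟩
      rw [← hedges] at hmemY
      obtain ⟨i', k', hA', heq⟩ := hmemY
      have hw : X.A i' k' = Y.A (σ i) (σ k) := (Prod.ext_iff.mp heq).2.symm
      have hs : s(Y.nodes (σ i), Y.nodes (σ k)) = s(X.nodes i', X.nodes k') :=
        (Prod.ext_iff.mp heq).1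
      rw [hσ i, hσ k] at hs
      rcases Sym2.eq_iff.mp hs with ⟨h1, h2⟩ | ⟨h1, h2⟩
      · have e1 : i = i' := X.nodes_inj h1
        have e2 : k = k' := X.nodes_inj h2
        rw [← e1, ← e2] at hA'
        exact hA' hik
      · have e1 : i = k' := X.nodes_inj h1
        have e2 : k = i' := X.nodes_inj h2
        rw [← e1, ← e2] at hA'
        rw [hsymmX i k] at hik
        exact hA' hik
    · have hmemX : (s(X.nodes i, X.nodes k), X.A i k) ∈ wEdgeSet X := ⟨i, k, hik, rfl⟩
      rw [hedges] at hmemX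
      obtain ⟨i', k', hA', heq⟩ := hmemX
      have hw : Y.A i' k' = X.A i k := (Prod.ext_iff.mp heq).2.symm
      have hs : s(X.nodes i, X.nodes k) = s(Y.nodes i', Y.nodes k') :=
        (Prod.ext_iff.mp heq).1
      rw [← hσ i, ← hσ k] at hs
      rcases Sym2.eq_iff.mp hs with ⟨h1, h2⟩ | ⟨h1, h2⟩
      · have e1 : σ i = i' := Y.nodes_inj h1
        have e2 : σ k = k' := Y.nodes_inj h2
        rw [e1, e2, hw]
      · have e1 : σ i = k' := Y.nodes_inj h1
        have e2 : σ k = i' := Y.nodes_inj h2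
        rw [hsymmY (σ i) (σ k), e1, e2, hw]
  exact ⟨⟨σ, τ, hli, hri⟩, fun i => (hσ i).symm, hA⟩

/-- If a feasible (relaxed) assignment has zero objective, the graphs are equal. -/
lemma wgraphEq_of_obj_zero {p c ε : ℝ} (hp : 1 ≤ p) (hc : 0 < c) (hε : 0 < ε)
    {X Y : WGraph 𝕏} {W : Matrix (Fin (X.n+1)) (Fin (Y.n+1)) ℝ}
    (hW : W ∈ WbarSet X.n Y.n) (hobj : obj p c ε X Y W = 0) : WGraphEq X Y := by
  have hp0 : (0:ℝ) < p := lt_of_lt_of_le one_pos hp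
  obtain ⟨hnn, hcol, hrow, hcorner⟩ := hW
  rw [obj_eq] at hobj
  have hcp : (0:ℝ) < c ^ p / 2 := by
    have := Real.rpow_pos_of_pos hc p; linarith
  have hep : (0:ℝ) < ε ^ p / 2 := by
    have := Real.rpow_pos_of_pos hε p; linarith
  -- nonnegativity of the four summands
  set T1 := ∑ i : Fin X.n, ∑ j : Fin Y.n,
      dist (X.nodes i) (Y.nodes j) ^ p * W i.castSucc j.castSucc with hT1def
  set T2 := ∑ i : Fin X.n, W i.castSucc (Fin.last Y.n) with hT2def
  set T3 := ∑ j : Fin Y.n, W (Fin.last X.n) j.castSucc with hT3def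
  have h1nn : 0 ≤ T1 := Finset.sum_nonneg fun i _ => Finset.sum_nonneg fun j _ =>
    mul_nonneg (Real.rpow_nonneg dist_nonneg _) (hnn _ _)
  have h2nn : 0 ≤ T2 := Finset.sum_nonneg fun i _ => hnn _ _
  have h3nn : 0 ≤ T3 := Finset.sum_nonneg fun j _ => hnn _ _
  have h4nn := onorm_nonneg (X.A * topLeft W - topLeft W * Y.A)
  have hT1 : T1 = 0 := by nlinarith
  have hT2 : T2 = 0 := by nlinarith
  have hT3 : T3 = 0 := by nlinarith
  have hT4 : onorm (X.A * topLeft W - topLeft W * Y.A) = 0 := by nlinarith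
  have hAW : X.A * topLeft W = topLeft W * Y.A := by
    have := onorm_eq_zero hT4
    rwa [sub_eq_zero] at this
  -- zero in the last column / row
  have hlastcol : ∀ i : Fin X.n, W i.castSucc (Fin.last Y.n) = 0 := by
    intro i
    exact (Finset.sum_eq_zero_iff_of_nonneg (fun i _ => hnn _ _)).mp hT2 i
      (Finset.mem_univ i)
  have hlastrow : ∀ j : Fin Y.n, W (Fin.last X.n) j.castSucc = 0 := by
    intro j
    exact (Finset.sum_eq_zero_iff_of_nonneg (fun j _ => hnn _ _)).mp hT3 j
      (Finset.mem_univ j)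
  -- matched pairs have coinciding nodes
  have hmatch : ∀ (i : Fin X.n) (j : Fin Y.n), W i.castSucc j.castSucc ≠ 0 →
      X.nodes i = Y.nodes j := by
    intro i j hne
    have houter := (Finset.sum_eq_zero_iff_of_nonneg
      (fun i _ => Finset.sum_nonneg fun j _ =>
        mul_nonneg (Real.rpow_nonneg dist_nonneg _) (hnn _ _))).mp hT1 i
      (Finset.mem_univ i)
    have hterm := (Finset.sum_eq_zero_iff_of_nonneg
      (fun j _ => mul_nonneg (Real.rpow_nonneg dist_nonneg _) (hnn _ _))).mp houter j
      (Finset.mem_univ j)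
    rcases mul_eq_zero.mp hterm with h | h
    · have := (Real.rpow_eq_zero dist_nonneg hp0.ne').mp h
      exact dist_eq_zero.mp this
    · exact absurd h hne
  -- row and column sums over the top-left block equal 1
  have hrow1 : ∀ i : Fin X.n, ∑ j : Fin Y.n, W i.castSucc j.castSucc = 1 := by
    intro i
    have := hrow i
    rw [Fin.sum_univ_castSucc, hlastcol i, add_zero] at this
    exact this
  have hcol1 : ∀ j : Fin Y.n, ∑ i : Fin X.n, W i.castSucc j.castSucc = 1 := by
    intro j
    have := hcol j
    rw [Fin.sum_univ_castSucc, hlastrow j, add_zero] at this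
    exact this
  -- the assignment σ
  have hexist : ∀ i : Fin X.n, ∃ j : Fin Y.n, W i.castSucc j.castSucc ≠ 0 := by
    intro i
    by_contra h
    push_neg at h
    have : ∑ j : Fin Y.n, W i.castSucc j.castSucc = 0 :=
      Finset.sum_eq_zero fun j _ => h j
    rw [hrow1 i] at this; norm_num at this
  choose σ hσne using hexist
  have hσnodes : ∀ i, X.nodes i = Y.nodes (σ i) := fun i => hmatch i (σ i) (hσne i)
  have hrowuniq : ∀ (i : Fin X.n) (j : Fin Y.n),
      W i.castSucc j.castSucc ≠ 0 → j = σ i := by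
    intro i j hne
    apply Y.nodes_inj
    rw [← hmatch i j hne, ← hσnodes i]
  have hW1 : ∀ i : Fin X.n, W i.castSucc (σ i).castSucc = 1 := by
    intro i
    have := hrow1 i
    rw [← Finset.add_sum_erase Finset.univ _ (Finset.mem_univ (σ i))] at this
    have hzero : ∑ j ∈ Finset.univ.erase (σ i), W i.castSucc j.castSucc = 0 := by
      refine Finset.sum_eq_zero fun j hj => ?_
      by_contra h
      exact (Finset.mem_erase.mp hj).1 (hrowuniq i j h)
    rw [hzero, add_zero] at this
    exact this
  -- the reverse assignment τ
  have hexist' : ∀ j : Fin Y.n, ∃ i : Fin X.n, W i.castSucc j.castSucc ≠ 0 := by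
    intro j
    by_contra h
    push_neg at h
    have : ∑ i : Fin X.n, W i.castSucc j.castSucc = 0 :=
      Finset.sum_eq_zero fun i _ => h i
    rw [hcol1 j] at this; norm_num at this
  choose τ hτne using hexist'
  have hcoluniq : ∀ (j : Fin Y.n) (i : Fin X.n),
      W i.castSucc j.castSucc ≠ 0 → i = τ j := by
    intro j i hne
    apply X.nodes_inj
    rw [hmatch i j hne, hmatch (τ j) j (hτne j)]
  have hli : ∀ i, τ (σ i) = i := fun i => (hcoluniq (σ i) i (hσne i)).symm
  have hri : ∀ j, σ (τ j) = j := fun j => (hrowuniq (τ j) j (hτne j)).symm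
  -- `W` restricted to the block is the permutation matrix of σ
  have hWperm : ∀ (i : Fin X.n) (j : Fin Y.n),
      W i.castSucc j.castSucc = if σ i = j then 1 else 0 := by
    intro i j
    by_cases h : σ i = j
    · rw [if_pos h, ← h, hW1 i]
    · rw [if_neg h]
      by_contra hne
      exact h ((hrowuniq i j hne).symm)
  -- adjacency matrices agree
  have hAeq : ∀ i k : Fin X.n, X.A i k = Y.A (σ i) (σ k) := by
    intro i k
    have := congrFun (congrFun hAW i) (σ k)
    simp only [Matrix.mul_apply] at this
    have hL : (∑ m, X.A i m * topLeft W m (σ k)) = X.A i k := by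
      have hent : ∀ m : Fin X.n, X.A i m * topLeft W m (σ k)
          = if m = k then X.A i m else 0 := by
        intro m
        have : topLeft W m (σ k) = if σ m = σ k then 1 else 0 := hWperm m (σ k)
        rw [this]
        by_cases h : m = k
        · subst h; simp
        · have hne : σ m ≠ σ k := fun hh => h (by
            have := congrArg τ hh; rwa [hli, hli] at this)
          simp [h, hne]
      rw [Finset.sum_congr rfl fun m _ => hent m]
      simp
    have hR : (∑ m, topLeft W i m * Y.A m (σ k)) = Y.A (σ i) (σ k) := by
      have hent : ∀ m : Fin Y.n, topLeft W i m * Y.A m (σ k)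
          = if m = σ i then Y.A m (σ k) else 0 := by
        intro m
        have : topLeft W i m = if σ i = m then 1 else 0 := hWperm i m
        rw [this]
        by_cases h : m = σ i
        · subst h; simp
        · rw [if_neg (fun hh : σ i = m => h hh.symm), if_neg h, zero_mul]
      rw [Finset.sum_congr rfl fun m _ => hent m]
      simp
    rw [hL, hR] at this
    exact this
  -- conclude graph equality
  constructor
  · ext x
    constructor
    · rintro ⟨i, rfl⟩
      exact ⟨σ i, (hσnodes i).symm⟩
    · rintro ⟨j, rfl⟩
      exact ⟨τ j, hmatch (τ j) j (hτne j)⟩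
  · ext e
    constructor
    · rintro ⟨i, k, hne, rfl⟩
      exact ⟨σ i, σ k, by rw [← hAeq]; exact hne,
        by rw [← hAeq, ← hσnodes i, ← hσnodes k]⟩
    · rintro ⟨i', k', hne, rfl⟩
      refine ⟨τ i', τ k', ?_, ?_⟩
      · rw [hAeq (τ i') (τ k'), hri, hri]; exact hne
      · rw [hAeq (τ i') (τ k'), hri, hri, hσnodes (τ i'), hσnodes (τ k'), hri, hri]

/-! ### Composition of assignments -/

/-- Composition of two assignment matrices. -/
noncomputable def compW {nX nZ nY : ℕ} (W1 : Matrix (Fin (nX+1)) (Fin (nZ+1)) ℝ)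
    (W2 : Matrix (Fin (nZ+1)) (Fin (nY+1)) ℝ) :
    Matrix (Fin (nX+1)) (Fin (nY+1)) ℝ :=
  fun i j =>
    if (i : ℕ) < nX then
      (if (j : ℕ) < nY then ∑ k : Fin nZ, W1 i k.castSucc * W2 k.castSucc j
       else W1 i (Fin.last nZ) +
         ∑ k : Fin nZ, W1 i k.castSucc * W2 k.castSucc (Fin.last nY))
    else
      (if (j : ℕ) < nY then W2 (Fin.last nZ) j +
         ∑ k : Fin nZ, W1 (Fin.last nX) k.castSucc * W2 k.castSucc j
       else 0)

section CompW

variable {nX nZ nY : ℕ} (W1 : Matrix (Fin (nX+1)) (Fin (nZ+1)) ℝ)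
  (W2 : Matrix (Fin (nZ+1)) (Fin (nY+1)) ℝ)

lemma compW_cc (i : Fin nX) (j : Fin nY) :
    compW W1 W2 i.castSucc j.castSucc
      = ∑ k : Fin nZ, W1 i.castSucc k.castSucc * W2 k.castSucc j.castSucc := by
  unfold compW
  rw [if_pos (by simp : ((i.castSucc : Fin (nX+1)) : ℕ) < nX),
    if_pos (by simp : ((j.castSucc : Fin (nY+1)) : ℕ) < nY)]

lemma compW_cl (i : Fin nX) :
    compW W1 W2 i.castSucc (Fin.last nY)
      = W1 i.castSucc (Fin.last nZ) +
        ∑ k : Fin nZ, W1 i.castSucc k.castSucc * W2 k.castSucc (Fin.last nY) := by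
  unfold compW
  rw [if_pos (by simp : ((i.castSucc : Fin (nX+1)) : ℕ) < nX),
    if_neg (by simp : ¬ ((Fin.last nY : Fin (nY+1)) : ℕ) < nY)]

lemma compW_lc (j : Fin nY) :
    compW W1 W2 (Fin.last nX) j.castSucc
      = W2 (Fin.last nZ) j.castSucc +
        ∑ k : Fin nZ, W1 (Fin.last nX) k.castSucc * W2 k.castSucc j.castSucc := by
  unfold compW
  rw [if_neg (by simp : ¬ ((Fin.last nX : Fin (nX+1)) : ℕ) < nX),
    if_pos (by simp : ((j.castSucc : Fin (nY+1)) : ℕ) < nY)]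

lemma compW_ll : compW W1 W2 (Fin.last nX) (Fin.last nY) = 0 := by
  unfold compW
  rw [if_neg (by simp : ¬ ((Fin.last nX : Fin (nX+1)) : ℕ) < nX),
    if_neg (by simp : ¬ ((Fin.last nY : Fin (nY+1)) : ℕ) < nY)]

lemma topLeft_compW : topLeft (compW W1 W2) = topLeft W1 * topLeft W2 := by
  ext i j
  rw [Matrix.mul_apply]
  exact compW_cc W1 W2 i j

lemma compW_mem_wbar (h1 : W1 ∈ WbarSet nX nZ) (h2 : W2 ∈ WbarSet nZ nY) :
    compW W1 W2 ∈ WbarSet nX nY := by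
  obtain ⟨h1nn, h1col, h1row, h1c⟩ := h1
  obtain ⟨h2nn, h2col, h2row, h2c⟩ := h2
  have hsumnn : ∀ (i : Fin (nX+1)) (j : Fin (nY+1)),
      (0:ℝ) ≤ ∑ k : Fin nZ, W1 i k.castSucc * W2 k.castSucc j :=
    fun i j => Finset.sum_nonneg fun k _ => mul_nonneg (h1nn _ _) (h2nn _ _)
  refine ⟨?_, ?_, ?_, compW_ll W1 W2⟩
  · intro i j
    unfold compW
    split
    · split
      · exact hsumnn _ _
      · exact add_nonneg (h1nn _ _) (hsumnn _ _)
    · split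
      · exact add_nonneg (h2nn _ _) (hsumnn _ _)
      · exact le_refl 0
  · intro j
    rw [Fin.sum_univ_castSucc]
    rw [Finset.sum_congr rfl fun i _ => compW_cc W1 W2 i j, compW_lc W1 W2 j]
    rw [Finset.sum_comm]
    have key : ∀ k : Fin nZ,
        (∑ i : Fin nX, W1 i.castSucc k.castSucc * W2 k.castSucc j.castSucc)
          + W1 (Fin.last nX) k.castSucc * W2 k.castSucc j.castSucc
        = W2 k.castSucc j.castSucc := by
      intro k
      rw [← Finset.sum_mul, ← add_mul]
      have : (∑ i : Fin nX, W1 i.castSucc k.castSucc) + W1 (Fin.last nX) k.castSucc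
          = 1 := by have := h1col k; rwa [Fin.sum_univ_castSucc] at this
      rw [this, one_mul]
    calc (∑ k : Fin nZ, ∑ i : Fin nX, W1 i.castSucc k.castSucc * W2 k.castSucc j.castSucc)
          + (W2 (Fin.last nZ) j.castSucc
            + ∑ k : Fin nZ, W1 (Fin.last nX) k.castSucc * W2 k.castSucc j.castSucc)
        = (∑ k : Fin nZ, ((∑ i : Fin nX, W1 i.castSucc k.castSucc * W2 k.castSucc j.castSucc)
            + W1 (Fin.last nX) k.castSucc * W2 k.castSucc j.castSucc))
          + W2 (Fin.last nZ) j.castSucc := by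
          rw [Finset.sum_add_distrib]; ring
      _ = (∑ k : Fin nZ, W2 k.castSucc j.castSucc) + W2 (Fin.last nZ) j.castSucc := by
          rw [Finset.sum_congr rfl fun k _ => key k]
      _ = 1 := by have := h2col j; rwa [Fin.sum_univ_castSucc] at this
  · intro i
    rw [Fin.sum_univ_castSucc]
    rw [Finset.sum_congr rfl fun j _ => compW_cc W1 W2 i j, compW_cl W1 W2 i]
    rw [Finset.sum_comm]
    have key : ∀ k : Fin nZ,
        (∑ j : Fin nY, W1 i.castSucc k.castSucc * W2 k.castSucc j.castSucc)
          + W1 i.castSucc k.castSucc * W2 k.castSucc (Fin.last nY)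
        = W1 i.castSucc k.castSucc := by
      intro k
      rw [← Finset.mul_sum, ← mul_add]
      have : (∑ j : Fin nY, W2 k.castSucc j.castSucc) + W2 k.castSucc (Fin.last nY)
          = 1 := by have := h2row k; rwa [Fin.sum_univ_castSucc] at this
      rw [this, mul_one]
    calc (∑ k : Fin nZ, ∑ j : Fin nY, W1 i.castSucc k.castSucc * W2 k.castSucc j.castSucc)
          + (W1 i.castSucc (Fin.last nZ)
            + ∑ k : Fin nZ, W1 i.castSucc k.castSucc * W2 k.castSucc (Fin.last nY))
        = (∑ k : Fin nZ, ((∑ j : Fin nY, W1 i.castSucc k.castSucc * W2 k.castSucc j.castSucc)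
            + W1 i.castSucc k.castSucc * W2 k.castSucc (Fin.last nY)))
          + W1 i.castSucc (Fin.last nZ) := by
          rw [Finset.sum_add_distrib]; ring
      _ = (∑ k : Fin nZ, W1 i.castSucc k.castSucc) + W1 i.castSucc (Fin.last nZ) := by
          rw [Finset.sum_congr rfl fun k _ => key k]
      _ = 1 := by have := h1row i; rwa [Fin.sum_univ_castSucc] at this

lemma compW_mem_wset (h1 : W1 ∈ Wset nX nZ) (h2 : W2 ∈ Wset nZ nY) :
    compW W1 W2 ∈ Wset nX nY := by
  obtain ⟨hbar1, hbar2, hbar3, hbar4⟩ :=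
    compW_mem_wbar W1 W2 (Wset_subset h1) (Wset_subset h2)
  obtain ⟨h1b, h1col, h1row, h1c⟩ := h1
  obtain ⟨h2b, h2col, h2row, h2c⟩ := h2
  refine ⟨?_, hbar2, hbar3, hbar4⟩
  intro i j
  rcases Fin.eq_castSucc_or_eq_last i with ⟨i', rfl⟩ | rfl
  · -- use the unique 1 in row i' of W1
    obtain ⟨k0, hk0, hk0'⟩ := binary_row_unique (fun k => h1b i'.castSucc k) (h1row i')
    rcases Fin.eq_castSucc_or_eq_last j with ⟨j', rfl⟩ | rfl
    · rw [compW_cc]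
      rcases Fin.eq_castSucc_or_eq_last k0 with ⟨k0', rfl⟩ | rfl
      · rw [Finset.sum_eq_single k0']
        · rw [hk0]; rw [one_mul]; exact h2b _ _
        · intro k _ hk
          rw [hk0' k.castSucc (fun hh => hk (by
            exact Fin.castSucc_injective _ hh)), zero_mul]
        · intro h; exact absurd (Finset.mem_univ k0') h
      · left
        refine Finset.sum_eq_zero fun k _ => ?_
        rw [hk0' k.castSucc (by
          intro hh
          exact absurd (congrArg (fun x : Fin (nZ+1) => (x:ℕ)) hh)
            (by simp [Fin.ext_iff]; omega)), zero_mul]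
    · rw [compW_cl]
      rcases Fin.eq_castSucc_or_eq_last k0 with ⟨k0', rfl⟩ | rfl
      · have hz : W1 i'.castSucc (Fin.last nZ) = 0 :=
          hk0' (Fin.last nZ) (by
            intro hh
            exact absurd (congrArg (fun x : Fin (nZ+1) => (x:ℕ)) hh)
              (by simp [Fin.ext_iff]; omega))
        rw [hz, zero_add, Finset.sum_eq_single k0']
        · rw [hk0, one_mul]; exact h2b _ _
        · intro k _ hk
          rw [hk0' k.castSucc (fun hh => hk (Fin.castSucc_injective _ hh)), zero_mul]
        · intro h; exact absurd (Finset.mem_univ k0') h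
      · right
        have hz : ∀ k : Fin nZ, W1 i'.castSucc k.castSucc = 0 := by
          intro k
          refine hk0' k.castSucc ?_
          intro hh
          exact absurd (congrArg (fun x : Fin (nZ+1) => (x:ℕ)) hh)
            (by simp [Fin.ext_iff]; omega)
        rw [hk0, Finset.sum_eq_zero fun k _ => by rw [hz k, zero_mul], add_zero]
  · rcases Fin.eq_castSucc_or_eq_last j with ⟨j', rfl⟩ | rfl
    · -- use the unique 1 in column j' of W2
      obtain ⟨k1, hk1, hk1'⟩ := binary_row_unique (fun k => h2b k j'.castSucc) (h2col j')
      rw [compW_lc]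
      rcases Fin.eq_castSucc_or_eq_last k1 with ⟨k1', rfl⟩ | rfl
      · have hz : W2 (Fin.last nZ) j'.castSucc = 0 :=
          hk1' (Fin.last nZ) (by
            intro hh
            exact absurd (congrArg (fun x : Fin (nZ+1) => (x:ℕ)) hh)
              (by simp [Fin.ext_iff]; omega))
        rw [hz, zero_add, Finset.sum_eq_single k1']
        · rw [hk1, mul_one]; exact h1b _ _
        · intro k _ hk
          rw [hk1' k.castSucc (fun hh => hk (Fin.castSucc_injective _ hh)), mul_zero]
        · intro h; exact absurd (Finset.mem_univ k1') h
      · right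
        have hz : ∀ k : Fin nZ, W2 k.castSucc j'.castSucc = 0 := by
          intro k
          refine hk1' k.castSucc ?_
          intro hh
          exact absurd (congrArg (fun x : Fin (nZ+1) => (x:ℕ)) hh)
            (by simp [Fin.ext_iff]; omega)
        rw [hk1, Finset.sum_eq_zero fun k _ => by rw [hz k, mul_zero], add_zero]
    · left; exact compW_ll W1 W2

end CompW

/-! ### Triangle inequality -/

lemma rpow_inv_p {p t : ℝ} (ht : 0 ≤ t) (hp : p ≠ 0) : (t ^ (1/p)) ^ p = t := by
  rw [← Real.rpow_mul ht, one_div, inv_mul_cancel₀ hp, Real.rpow_one]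

/-- Index type for the Minkowski argument. -/
abbrev TriIdx (a b d : ℕ) :=
  (Fin a × Fin b × Fin d) ⊕
    (Fin a ⊕ ((Fin a × Fin b) ⊕ (Fin d ⊕ ((Fin b × Fin d) ⊕ (Fin a × Fin d)))))

variable (p c ε : ℝ) (X Z Y : WGraph 𝕏)
  (W1 : Matrix (Fin (X.n+1)) (Fin (Z.n+1)) ℝ)
  (W2 : Matrix (Fin (Z.n+1)) (Fin (Y.n+1)) ℝ)

/-- First component vector for Minkowski. -/
noncomputable def uVec : TriIdx X.n Z.n Y.n → ℝ
  | .inl (i, k, j) => dist (X.nodes i) (Z.nodes k) *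
      (W1 i.castSucc k.castSucc * W2 k.castSucc j.castSucc) ^ (1/p)
  | .inr (.inl i) => (c ^ p / 2 * W1 i.castSucc (Fin.last Z.n)) ^ (1/p)
  | .inr (.inr (.inl _)) => 0
  | .inr (.inr (.inr (.inl _))) => 0
  | .inr (.inr (.inr (.inr (.inl (k, j))))) =>
      (c ^ p / 2 * (W1 (Fin.last X.n) k.castSucc * W2 k.castSucc j.castSucc)) ^ (1/p)
  | .inr (.inr (.inr (.inr (.inr (i, j))))) =>
      (ε ^ p / 2 *
        |((X.A * topLeft W1 - topLeft W1 * Z.A) * topLeft W2) i j|) ^ (1/p)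

/-- Second component vector for Minkowski. -/
noncomputable def vVec : TriIdx X.n Z.n Y.n → ℝ
  | .inl (i, k, j) => dist (Z.nodes k) (Y.nodes j) *
      (W1 i.castSucc k.castSucc * W2 k.castSucc j.castSucc) ^ (1/p)
  | .inr (.inl _) => 0
  | .inr (.inr (.inl (i, k))) =>
      (c ^ p / 2 * (W1 i.castSucc k.castSucc * W2 k.castSucc (Fin.last Y.n))) ^ (1/p)
  | .inr (.inr (.inr (.inl j))) => (c ^ p / 2 * W2 (Fin.last Z.n) j.castSucc) ^ (1/p)
  | .inr (.inr (.inr (.inr (.inl _)))) => 0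
  | .inr (.inr (.inr (.inr (.inr (i, j))))) =>
      (ε ^ p / 2 *
        |(topLeft W1 * (Z.A * topLeft W2 - topLeft W2 * Y.A)) i j|) ^ (1/p)

variable {p c ε X Z Y W1 W2}

lemma uVec_nonneg (hW1 : ∀ i j, 0 ≤ W1 i j) (hW2 : ∀ i j, 0 ≤ W2 i j)
    (hc : 0 ≤ c) (hε : 0 ≤ ε) (s : TriIdx X.n Z.n Y.n) :
    0 ≤ uVec p c ε X Z Y W1 W2 s := by
  have hcp : (0:ℝ) ≤ c ^ p / 2 := by positivity
  have hep : (0:ℝ) ≤ ε ^ p / 2 := by positivity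
  rcases s with ⟨i, k, j⟩ | (i | (⟨i, k⟩ | (j | (⟨k, j⟩ | ⟨i, j⟩)))) <;>
    simp only [uVec]
  · exact mul_nonneg dist_nonneg
      (Real.rpow_nonneg (mul_nonneg (hW1 _ _) (hW2 _ _)) _)
  · exact Real.rpow_nonneg (mul_nonneg hcp (hW1 _ _)) _
  · exact le_refl 0
  · exact le_refl 0
  · exact Real.rpow_nonneg
      (mul_nonneg hcp (mul_nonneg (hW1 _ _) (hW2 _ _))) _
  · exact Real.rpow_nonneg (mul_nonneg hep (abs_nonneg _)) _

lemma vVec_nonneg (hW1 : ∀ i j, 0 ≤ W1 i j) (hW2 : ∀ i j, 0 ≤ W2 i j)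
    (hc : 0 ≤ c) (hε : 0 ≤ ε) (s : TriIdx X.n Z.n Y.n) :
    0 ≤ vVec p c ε X Z Y W1 W2 s := by
  have hcp : (0:ℝ) ≤ c ^ p / 2 := by positivity
  have hep : (0:ℝ) ≤ ε ^ p / 2 := by positivity
  rcases s with ⟨i, k, j⟩ | (i | (⟨i, k⟩ | (j | (⟨k, j⟩ | ⟨i, j⟩)))) <;>
    simp only [vVec]
  · exact mul_nonneg dist_nonneg
      (Real.rpow_nonneg (mul_nonneg (hW1 _ _) (hW2 _ _)) _)
  · exact le_refl 0
  · exact Real.rpow_nonneg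
      (mul_nonneg hcp (mul_nonneg (hW1 _ _) (hW2 _ _))) _
  · exact Real.rpow_nonneg (mul_nonneg hcp (hW2 _ _)) _
  · exact le_refl 0
  · exact Real.rpow_nonneg (mul_nonneg hep (abs_nonneg _)) _

lemma sum_u_pow_le (hp : 1 ≤ p) (hc : 0 < c) (hε : 0 < ε)
    (h1 : W1 ∈ WbarSet X.n Z.n) (h2 : W2 ∈ WbarSet Z.n Y.n) :
    ∑ s, uVec p c ε X Z Y W1 W2 s ^ p ≤ obj p c ε X Z W1 := by
  have hp0 : (0:ℝ) < p := lt_of_lt_of_le one_pos hp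
  have hpne : p ≠ 0 := hp0.ne'
  have hW1 := h1.1
  have hW2 := h2.1
  have hcp : (0:ℝ) ≤ c ^ p / 2 := by positivity
  have hep : (0:ℝ) ≤ ε ^ p / 2 := by positivity
  rw [obj_eq]
  simp only [Fintype.sum_sum_type, Fintype.sum_prod_type, uVec]
  have hzero : ((0:ℝ)) ^ p = 0 := Real.zero_rpow hpne
  -- group 1
  have hg1 : ∑ i : Fin X.n, ∑ k : Fin Z.n, ∑ j : Fin Y.n,
      (dist (X.nodes i) (Z.nodes k) *
        (W1 i.castSucc k.castSucc * W2 k.castSucc j.castSucc) ^ (1/p)) ^ p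
      ≤ ∑ i : Fin X.n, ∑ k : Fin Z.n,
          dist (X.nodes i) (Z.nodes k) ^ p * W1 i.castSucc k.castSucc := by
    refine Finset.sum_le_sum fun i _ => Finset.sum_le_sum fun k _ => ?_
    have hterm : ∀ j : Fin Y.n,
        (dist (X.nodes i) (Z.nodes k) *
          (W1 i.castSucc k.castSucc * W2 k.castSucc j.castSucc) ^ (1/p)) ^ p
        = dist (X.nodes i) (Z.nodes k) ^ p *
            (W1 i.castSucc k.castSucc * W2 k.castSucc j.castSucc) := by
      intro j
      rw [Real.mul_rpow dist_nonneg (Real.rpow_nonneg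
        (mul_nonneg (hW1 _ _) (hW2 _ _)) _),
        rpow_inv_p (mul_nonneg (hW1 _ _) (hW2 _ _)) hpne]
    rw [Finset.sum_congr rfl fun j _ => hterm j, ← Finset.mul_sum, ← Finset.mul_sum]
    refine mul_le_mul_of_nonneg_left ?_ (Real.rpow_nonneg dist_nonneg _)
    calc W1 i.castSucc k.castSucc * ∑ j : Fin Y.n, W2 k.castSucc j.castSucc
        ≤ W1 i.castSucc k.castSucc * 1 :=
          mul_le_mul_of_nonneg_left (wbar_sum_row_le h2 k) (hW1 _ _)
      _ = W1 i.castSucc k.castSucc := mul_one _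
  -- group B1
  have hg2 : ∑ i : Fin X.n,
      ((c ^ p / 2 * W1 i.castSucc (Fin.last Z.n)) ^ (1/p)) ^ p
      = c ^ p / 2 * ∑ i : Fin X.n, W1 i.castSucc (Fin.last Z.n) := by
    rw [Finset.mul_sum]
    refine Finset.sum_congr rfl fun i _ => ?_
    rw [rpow_inv_p (mul_nonneg hcp (hW1 _ _)) hpne]
  -- group C2
  have hg3 : ∑ k : Fin Z.n, ∑ j : Fin Y.n,
      ((c ^ p / 2 * (W1 (Fin.last X.n) k.castSucc * W2 k.castSucc j.castSucc))
        ^ (1/p)) ^ p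
      ≤ c ^ p / 2 * ∑ k : Fin Z.n, W1 (Fin.last X.n) k.castSucc := by
    rw [Finset.mul_sum]
    refine Finset.sum_le_sum fun k _ => ?_
    have hterm : ∀ j : Fin Y.n,
        ((c ^ p / 2 * (W1 (Fin.last X.n) k.castSucc * W2 k.castSucc j.castSucc))
          ^ (1/p)) ^ p
        = c ^ p / 2 * (W1 (Fin.last X.n) k.castSucc * W2 k.castSucc j.castSucc) :=
      fun j => rpow_inv_p (mul_nonneg hcp (mul_nonneg (hW1 _ _) (hW2 _ _))) hpne
    rw [Finset.sum_congr rfl fun j _ => hterm j, ← Finset.mul_sum, ← Finset.mul_sum]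
    refine mul_le_mul_of_nonneg_left ?_ hcp
    calc W1 (Fin.last X.n) k.castSucc * ∑ j : Fin Y.n, W2 k.castSucc j.castSucc
        ≤ W1 (Fin.last X.n) k.castSucc * 1 :=
          mul_le_mul_of_nonneg_left (wbar_sum_row_le h2 k) (hW1 _ _)
      _ = W1 (Fin.last X.n) k.castSucc := mul_one _
  -- group E
  have hg4 : ∑ i : Fin X.n, ∑ j : Fin Y.n,
      ((ε ^ p / 2 *
        |((X.A * topLeft W1 - topLeft W1 * Z.A) * topLeft W2) i j|) ^ (1/p)) ^ p
      ≤ ε ^ p / 2 * onorm (X.A * topLeft W1 - topLeft W1 * Z.A) := by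
    have hterm : ∀ (i : Fin X.n) (j : Fin Y.n),
        ((ε ^ p / 2 *
          |((X.A * topLeft W1 - topLeft W1 * Z.A) * topLeft W2) i j|) ^ (1/p)) ^ p
        = ε ^ p / 2 *
          |((X.A * topLeft W1 - topLeft W1 * Z.A) * topLeft W2) i j| :=
      fun i j => rpow_inv_p (mul_nonneg hep (abs_nonneg _)) hpne
    rw [Finset.sum_congr rfl fun i _ => Finset.sum_congr rfl fun j _ => hterm i j]
    have : ∑ i : Fin X.n, ∑ j : Fin Y.n, ε ^ p / 2 *
        |((X.A * topLeft W1 - topLeft W1 * Z.A) * topLeft W2) i j|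
        = ε ^ p / 2 * onorm ((X.A * topLeft W1 - topLeft W1 * Z.A) * topLeft W2) := by
      unfold onorm
      rw [Finset.mul_sum]
      exact Finset.sum_congr rfl fun i _ => by rw [Finset.mul_sum]
    rw [this]
    refine mul_le_mul_of_nonneg_left ?_ hep
    exact onorm_mul_le_right _ (fun k j => hW2 _ _) (fun k => wbar_sum_row_le h2 k)
  simp only [hzero, Finset.sum_const_zero, add_zero, zero_add]
  linarith

lemma sum_v_pow_le (hp : 1 ≤ p) (hc : 0 < c) (hε : 0 < ε)
    (h1 : W1 ∈ WbarSet X.n Z.n) (h2 : W2 ∈ WbarSet Z.n Y.n) :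
    ∑ s, vVec p c ε X Z Y W1 W2 s ^ p ≤ obj p c ε Z Y W2 := by
  have hp0 : (0:ℝ) < p := lt_of_lt_of_le one_pos hp
  have hpne : p ≠ 0 := hp0.ne'
  have hW1 := h1.1
  have hW2 := h2.1
  have hcp : (0:ℝ) ≤ c ^ p / 2 := by positivity
  have hep : (0:ℝ) ≤ ε ^ p / 2 := by positivity
  rw [obj_eq]
  simp only [Fintype.sum_sum_type, Fintype.sum_prod_type, vVec]
  have hzero : ((0:ℝ)) ^ p = 0 := Real.zero_rpow hpne
  -- group 1
  have hg1 : ∑ i : Fin X.n, ∑ k : Fin Z.n, ∑ j : Fin Y.n,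
      (dist (Z.nodes k) (Y.nodes j) *
        (W1 i.castSucc k.castSucc * W2 k.castSucc j.castSucc) ^ (1/p)) ^ p
      ≤ ∑ k : Fin Z.n, ∑ j : Fin Y.n,
          dist (Z.nodes k) (Y.nodes j) ^ p * W2 k.castSucc j.castSucc := by
    have hterm : ∀ (i : Fin X.n) (k : Fin Z.n) (j : Fin Y.n),
        (dist (Z.nodes k) (Y.nodes j) *
          (W1 i.castSucc k.castSucc * W2 k.castSucc j.castSucc) ^ (1/p)) ^ p
        = dist (Z.nodes k) (Y.nodes j) ^ p *
            (W1 i.castSucc k.castSucc * W2 k.castSucc j.castSucc) := by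
      intro i k j
      rw [Real.mul_rpow dist_nonneg (Real.rpow_nonneg
        (mul_nonneg (hW1 _ _) (hW2 _ _)) _),
        rpow_inv_p (mul_nonneg (hW1 _ _) (hW2 _ _)) hpne]
    rw [Finset.sum_congr rfl fun i _ => Finset.sum_congr rfl fun k _ =>
      Finset.sum_congr rfl fun j _ => hterm i k j]
    rw [Finset.sum_comm]
    refine Finset.sum_le_sum fun k _ => ?_
    rw [Finset.sum_comm]
    refine Finset.sum_le_sum fun j _ => ?_
    have : ∑ i : Fin X.n, dist (Z.nodes k) (Y.nodes j) ^ p *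
        (W1 i.castSucc k.castSucc * W2 k.castSucc j.castSucc)
        = dist (Z.nodes k) (Y.nodes j) ^ p * W2 k.castSucc j.castSucc *
          ∑ i : Fin X.n, W1 i.castSucc k.castSucc := by
      rw [Finset.mul_sum]
      exact Finset.sum_congr rfl fun i _ => by ring
    rw [this]
    calc dist (Z.nodes k) (Y.nodes j) ^ p * W2 k.castSucc j.castSucc *
          ∑ i : Fin X.n, W1 i.castSucc k.castSucc
        ≤ dist (Z.nodes k) (Y.nodes j) ^ p * W2 k.castSucc j.castSucc * 1 := by
          refine mul_le_mul_of_nonneg_left (wbar_sum_col_le h1 k) ?_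
          exact mul_nonneg (Real.rpow_nonneg dist_nonneg _) (hW2 _ _)
      _ = dist (Z.nodes k) (Y.nodes j) ^ p * W2 k.castSucc j.castSucc := mul_one _
  -- group B2
  have hg2 : ∑ i : Fin X.n, ∑ k : Fin Z.n,
      ((c ^ p / 2 * (W1 i.castSucc k.castSucc * W2 k.castSucc (Fin.last Y.n)))
        ^ (1/p)) ^ p
      ≤ c ^ p / 2 * ∑ k : Fin Z.n, W2 k.castSucc (Fin.last Y.n) := by
    have hterm : ∀ (i : Fin X.n) (k : Fin Z.n),
        ((c ^ p / 2 * (W1 i.castSucc k.castSucc * W2 k.castSucc (Fin.last Y.n)))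
          ^ (1/p)) ^ p
        = c ^ p / 2 * (W1 i.castSucc k.castSucc * W2 k.castSucc (Fin.last Y.n)) :=
      fun i k => rpow_inv_p (mul_nonneg hcp (mul_nonneg (hW1 _ _) (hW2 _ _))) hpne
    rw [Finset.sum_congr rfl fun i _ => Finset.sum_congr rfl fun k _ => hterm i k]
    rw [Finset.sum_comm, Finset.mul_sum]
    refine Finset.sum_le_sum fun k _ => ?_
    have : ∑ i : Fin X.n, c ^ p / 2 *
        (W1 i.castSucc k.castSucc * W2 k.castSucc (Fin.last Y.n))
        = c ^ p / 2 * W2 k.castSucc (Fin.last Y.n) *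
          ∑ i : Fin X.n, W1 i.castSucc k.castSucc := by
      rw [Finset.mul_sum]
      exact Finset.sum_congr rfl fun i _ => by ring
    rw [this]
    calc c ^ p / 2 * W2 k.castSucc (Fin.last Y.n) *
          ∑ i : Fin X.n, W1 i.castSucc k.castSucc
        ≤ c ^ p / 2 * W2 k.castSucc (Fin.last Y.n) * 1 :=
          mul_le_mul_of_nonneg_left (wbar_sum_col_le h1 k)
            (mul_nonneg hcp (hW2 _ _))
      _ = c ^ p / 2 * W2 k.castSucc (Fin.last Y.n) := mul_one _
  -- group C1
  have hg3 : ∑ j : Fin Y.n,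
      ((c ^ p / 2 * W2 (Fin.last Z.n) j.castSucc) ^ (1/p)) ^ p
      = c ^ p / 2 * ∑ j : Fin Y.n, W2 (Fin.last Z.n) j.castSucc := by
    rw [Finset.mul_sum]
    exact Finset.sum_congr rfl fun j _ =>
      rpow_inv_p (mul_nonneg hcp (hW2 _ _)) hpne
  -- group E
  have hg4 : ∑ i : Fin X.n, ∑ j : Fin Y.n,
      ((ε ^ p / 2 *
        |(topLeft W1 * (Z.A * topLeft W2 - topLeft W2 * Y.A)) i j|) ^ (1/p)) ^ p
      ≤ ε ^ p / 2 * onorm (Z.A * topLeft W2 - topLeft W2 * Y.A) := by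
    have hterm : ∀ (i : Fin X.n) (j : Fin Y.n),
        ((ε ^ p / 2 *
          |(topLeft W1 * (Z.A * topLeft W2 - topLeft W2 * Y.A)) i j|) ^ (1/p)) ^ p
        = ε ^ p / 2 *
          |(topLeft W1 * (Z.A * topLeft W2 - topLeft W2 * Y.A)) i j| :=
      fun i j => rpow_inv_p (mul_nonneg hep (abs_nonneg _)) hpne
    rw [Finset.sum_congr rfl fun i _ => Finset.sum_congr rfl fun j _ => hterm i j]
    have : ∑ i : Fin X.n, ∑ j : Fin Y.n, ε ^ p / 2 *
        |(topLeft W1 * (Z.A * topLeft W2 - topLeft W2 * Y.A)) i j|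
        = ε ^ p / 2 * onorm (topLeft W1 * (Z.A * topLeft W2 - topLeft W2 * Y.A)) := by
      unfold onorm
      rw [Finset.mul_sum]
      exact Finset.sum_congr rfl fun i _ => by rw [Finset.mul_sum]
    rw [this]
    refine mul_le_mul_of_nonneg_left ?_ hep
    exact onorm_mul_le_left _ (fun i k => hW1 _ _) (fun k => wbar_sum_col_le h1 k)
  simp only [hzero, Finset.sum_const_zero, add_zero, zero_add]
  linarith

lemma obj_comp_le_sum (hp : 1 ≤ p) (hc : 0 < c) (hε : 0 < ε)
    (h1 : W1 ∈ WbarSet X.n Z.n) (h2 : W2 ∈ WbarSet Z.n Y.n) :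
    obj p c ε X Y (compW W1 W2)
      ≤ ∑ s, (uVec p c ε X Z Y W1 W2 s + vVec p c ε X Z Y W1 W2 s) ^ p := by
  have hp0 : (0:ℝ) < p := lt_of_lt_of_le one_pos hp
  have hpne : p ≠ 0 := hp0.ne'
  have hW1 := h1.1
  have hW2 := h2.1
  have hcp : (0:ℝ) ≤ c ^ p / 2 := by positivity
  have hep : (0:ℝ) ≤ ε ^ p / 2 := by positivity
  rw [obj_eq]
  simp only [Fintype.sum_sum_type, Fintype.sum_prod_type, uVec, vVec]
  -- algebraic splitting of the edge-mismatch matrix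
  have hsplit : X.A * topLeft (compW W1 W2) - topLeft (compW W1 W2) * Y.A
      = (X.A * topLeft W1 - topLeft W1 * Z.A) * topLeft W2
        + topLeft W1 * (Z.A * topLeft W2 - topLeft W2 * Y.A) := by
    rw [topLeft_compW]
    rw [Matrix.sub_mul, Matrix.mul_sub, ← Matrix.mul_assoc, ← Matrix.mul_assoc,
      ← Matrix.mul_assoc]
    abel
  -- group 1 bound
  have hg1 : ∑ i : Fin X.n, ∑ j : Fin Y.n,
      dist (X.nodes i) (Y.nodes j) ^ p * compW W1 W2 i.castSucc j.castSucc
      ≤ ∑ i : Fin X.n, ∑ k : Fin Z.n, ∑ j : Fin Y.n,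
          (dist (X.nodes i) (Z.nodes k) *
              (W1 i.castSucc k.castSucc * W2 k.castSucc j.castSucc) ^ (1/p)
            + dist (Z.nodes k) (Y.nodes j) *
              (W1 i.castSucc k.castSucc * W2 k.castSucc j.castSucc) ^ (1/p)) ^ p := by
    have hterm : ∀ (i : Fin X.n) (k : Fin Z.n) (j : Fin Y.n),
        (dist (X.nodes i) (Z.nodes k) *
            (W1 i.castSucc k.castSucc * W2 k.castSucc j.castSucc) ^ (1/p)
          + dist (Z.nodes k) (Y.nodes j) *
            (W1 i.castSucc k.castSucc * W2 k.castSucc j.castSucc) ^ (1/p)) ^ p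
        = (dist (X.nodes i) (Z.nodes k) + dist (Z.nodes k) (Y.nodes j)) ^ p *
            (W1 i.castSucc k.castSucc * W2 k.castSucc j.castSucc) := by
      intro i k j
      rw [← add_mul, Real.mul_rpow (by positivity) (Real.rpow_nonneg
        (mul_nonneg (hW1 _ _) (hW2 _ _)) _),
        rpow_inv_p (mul_nonneg (hW1 _ _) (hW2 _ _)) hpne]
    rw [Finset.sum_congr rfl fun i _ => Finset.sum_congr rfl fun k _ =>
      Finset.sum_congr rfl fun j _ => hterm i k j]
    refine Finset.sum_le_sum fun i _ => ?_
    rw [Finset.sum_comm]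
    refine Finset.sum_le_sum fun j _ => ?_
    rw [compW_cc, Finset.mul_sum]
    refine Finset.sum_le_sum fun k _ => ?_
    refine mul_le_mul_of_nonneg_right ?_ (mul_nonneg (hW1 _ _) (hW2 _ _))
    refine Real.rpow_le_rpow dist_nonneg (dist_triangle _ _ _) hp0.le
  -- group 2 (unassigned X nodes): equality
  have hg2 : c ^ p / 2 * ∑ i : Fin X.n, compW W1 W2 i.castSucc (Fin.last Y.n)
      = (∑ i : Fin X.n,
          (((c ^ p / 2 * W1 i.castSucc (Fin.last Z.n)) ^ (1/p)) + 0) ^ p)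
        + ∑ i : Fin X.n, ∑ k : Fin Z.n,
            ((0:ℝ) + (c ^ p / 2 *
              (W1 i.castSucc k.castSucc * W2 k.castSucc (Fin.last Y.n))) ^ (1/p)) ^ p := by
    have e1 : ∀ i : Fin X.n,
        (((c ^ p / 2 * W1 i.castSucc (Fin.last Z.n)) ^ (1/p)) + 0) ^ p
        = c ^ p / 2 * W1 i.castSucc (Fin.last Z.n) := by
      intro i
      rw [add_zero, rpow_inv_p (mul_nonneg hcp (hW1 _ _)) hpne]
    have e2 : ∀ (i : Fin X.n) (k : Fin Z.n),
        ((0:ℝ) + (c ^ p / 2 *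
          (W1 i.castSucc k.castSucc * W2 k.castSucc (Fin.last Y.n))) ^ (1/p)) ^ p
        = c ^ p / 2 * (W1 i.castSucc k.castSucc * W2 k.castSucc (Fin.last Y.n)) := by
      intro i k
      rw [zero_add, rpow_inv_p (mul_nonneg hcp (mul_nonneg (hW1 _ _) (hW2 _ _))) hpne]
    rw [Finset.sum_congr rfl fun i _ => e1 i,
      Finset.sum_congr rfl fun i _ => Finset.sum_congr rfl fun k _ => e2 i k]
    rw [Finset.mul_sum]
    rw [Finset.sum_congr rfl fun i (_ : i ∈ Finset.univ) =>
      congrArg (c ^ p / 2 * ·) (compW_cl W1 W2 i)]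
    rw [← Finset.sum_add_distrib]
    refine Finset.sum_congr rfl fun i _ => ?_
    simp only [mul_add, Finset.mul_sum]
  -- group 3 (unassigned Y nodes): equality
  have hg3 : c ^ p / 2 * ∑ j : Fin Y.n, compW W1 W2 (Fin.last X.n) j.castSucc
      = (∑ j : Fin Y.n,
          ((0:ℝ) + (c ^ p / 2 * W2 (Fin.last Z.n) j.castSucc) ^ (1/p)) ^ p)
        + ∑ k : Fin Z.n, ∑ j : Fin Y.n,
            (((c ^ p / 2 *
              (W1 (Fin.last X.n) k.castSucc * W2 k.castSucc j.castSucc)) ^ (1/p))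
              + 0) ^ p := by
    have e1 : ∀ j : Fin Y.n,
        ((0:ℝ) + (c ^ p / 2 * W2 (Fin.last Z.n) j.castSucc) ^ (1/p)) ^ p
        = c ^ p / 2 * W2 (Fin.last Z.n) j.castSucc := by
      intro j
      rw [zero_add, rpow_inv_p (mul_nonneg hcp (hW2 _ _)) hpne]
    have e2 : ∀ (k : Fin Z.n) (j : Fin Y.n),
        (((c ^ p / 2 *
          (W1 (Fin.last X.n) k.castSucc * W2 k.castSucc j.castSucc)) ^ (1/p)) + 0) ^ p
        = c ^ p / 2 * (W1 (Fin.last X.n) k.castSucc * W2 k.castSucc j.castSucc) := by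
      intro k j
      rw [add_zero, rpow_inv_p (mul_nonneg hcp (mul_nonneg (hW1 _ _) (hW2 _ _))) hpne]
    rw [Finset.sum_congr rfl fun j _ => e1 j,
      Finset.sum_congr rfl fun k _ => Finset.sum_congr rfl fun j _ => e2 k j]
    rw [Finset.mul_sum]
    rw [Finset.sum_congr rfl fun j (_ : j ∈ Finset.univ) =>
      congrArg (c ^ p / 2 * ·) (compW_lc W1 W2 j)]
    rw [Finset.sum_comm (f := fun (k : Fin Z.n) (j : Fin Y.n) =>
      c ^ p / 2 * (W1 (Fin.last X.n) k.castSucc * W2 k.castSucc j.castSucc))]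
    rw [← Finset.sum_add_distrib]
    refine Finset.sum_congr rfl fun j _ => ?_
    simp only [mul_add, Finset.mul_sum]
  -- group 4 (edge mismatch)
  have hg4 : ε ^ p / 2 *
      onorm (X.A * topLeft (compW W1 W2) - topLeft (compW W1 W2) * Y.A)
      ≤ ∑ i : Fin X.n, ∑ j : Fin Y.n,
          ((ε ^ p / 2 *
            |((X.A * topLeft W1 - topLeft W1 * Z.A) * topLeft W2) i j|) ^ (1/p)
          + (ε ^ p / 2 *
            |(topLeft W1 * (Z.A * topLeft W2 - topLeft W2 * Y.A)) i j|) ^ (1/p)) ^ p := by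
    rw [hsplit]
    unfold onorm
    rw [Finset.mul_sum]
    refine Finset.sum_le_sum fun i _ => ?_
    rw [Finset.mul_sum]
    refine Finset.sum_le_sum fun j _ => ?_
    set a := |((X.A * topLeft W1 - topLeft W1 * Z.A) * topLeft W2) i j| with ha
    set b := |(topLeft W1 * (Z.A * topLeft W2 - topLeft W2 * Y.A)) i j| with hb
    have habs : |((X.A * topLeft W1 - topLeft W1 * Z.A) * topLeft W2
        + topLeft W1 * (Z.A * topLeft W2 - topLeft W2 * Y.A)) i j| ≤ a + b := by
      have hentry : ((X.A * topLeft W1 - topLeft W1 * Z.A) * topLeft W2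
          + topLeft W1 * (Z.A * topLeft W2 - topLeft W2 * Y.A)) i j
          = ((X.A * topLeft W1 - topLeft W1 * Z.A) * topLeft W2) i j
            + (topLeft W1 * (Z.A * topLeft W2 - topLeft W2 * Y.A)) i j := rfl
      rw [hentry, ha, hb]
      exact abs_add_le _ _
    calc ε ^ p / 2 * |((X.A * topLeft W1 - topLeft W1 * Z.A) * topLeft W2
          + topLeft W1 * (Z.A * topLeft W2 - topLeft W2 * Y.A)) i j|
        ≤ ε ^ p / 2 * (a + b) := mul_le_mul_of_nonneg_left habs hep
      _ = ε ^ p / 2 * a + ε ^ p / 2 * b := mul_add _ _ _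
      _ = ((ε ^ p / 2 * a) ^ (1/p)) ^ p + ((ε ^ p / 2 * b) ^ (1/p)) ^ p := by
          rw [rpow_inv_p (mul_nonneg hep (abs_nonneg _)) hpne,
            rpow_inv_p (mul_nonneg hep (abs_nonneg _)) hpne]
      _ ≤ ((ε ^ p / 2 * a) ^ (1/p) + (ε ^ p / 2 * b) ^ (1/p)) ^ p :=
          add_rpow_le (Real.rpow_nonneg (mul_nonneg hep (abs_nonneg _)) _)
            (Real.rpow_nonneg (mul_nonneg hep (abs_nonneg _)) _) hp
  linarith

/-- Core triangle estimate. -/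
lemma obj_comp_le (hp : 1 ≤ p) (hc : 0 < c) (hε : 0 < ε)
    (h1 : W1 ∈ WbarSet X.n Z.n) (h2 : W2 ∈ WbarSet Z.n Y.n) :
    obj p c ε X Y (compW W1 W2) ^ (1/p)
      ≤ obj p c ε X Z W1 ^ (1/p) + obj p c ε Z Y W2 ^ (1/p) := by
  have hp0 : (0:ℝ) < p := lt_of_lt_of_le one_pos hp
  have hq0 : (0:ℝ) ≤ 1/p := by positivity
  have hWnn := (compW_mem_wbar W1 W2 h1 h2).1
  have hu : ∀ s, 0 ≤ uVec p c ε X Z Y W1 W2 s :=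
    fun s => uVec_nonneg h1.1 h2.1 hc.le hε.le s
  have hv : ∀ s, 0 ≤ vVec p c ε X Z Y W1 W2 s :=
    fun s => vVec_nonneg h1.1 h2.1 hc.le hε.le s
  have step1 : obj p c ε X Y (compW W1 W2) ^ (1/p)
      ≤ (∑ s, (uVec p c ε X Z Y W1 W2 s + vVec p c ε X Z Y W1 W2 s) ^ p) ^ (1/p) :=
    Real.rpow_le_rpow (obj_nonneg hp0 hc.le hε.le X Y hWnn)
      (obj_comp_le_sum hp hc hε h1 h2) hq0
  have step2 : (∑ s, (uVec p c ε X Z Y W1 W2 s + vVec p c ε X Z Y W1 W2 s) ^ p) ^ (1/p)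
      ≤ (∑ s, uVec p c ε X Z Y W1 W2 s ^ p) ^ (1/p)
        + (∑ s, vVec p c ε X Z Y W1 W2 s ^ p) ^ (1/p) := by
    have := Real.Lp_add_le Finset.univ (uVec p c ε X Z Y W1 W2)
      (vVec p c ε X Z Y W1 W2) hp
    have habs : ∀ s : TriIdx X.n Z.n Y.n,
        |uVec p c ε X Z Y W1 W2 s + vVec p c ε X Z Y W1 W2 s|
          = uVec p c ε X Z Y W1 W2 s + vVec p c ε X Z Y W1 W2 s :=
      fun s => abs_of_nonneg (add_nonneg (hu s) (hv s))
    simp only [habs, fun s : TriIdx X.n Z.n Y.n => abs_of_nonneg (hu s),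
      fun s : TriIdx X.n Z.n Y.n => abs_of_nonneg (hv s)] at this
    exact this
  have step3 : (∑ s, uVec p c ε X Z Y W1 W2 s ^ p) ^ (1/p)
      ≤ obj p c ε X Z W1 ^ (1/p) :=
    Real.rpow_le_rpow (Finset.sum_nonneg fun s _ =>
        Real.rpow_nonneg (hu s) _)
      (sum_u_pow_le hp hc hε h1 h2) hq0
  have step4 : (∑ s, vVec p c ε X Z Y W1 W2 s ^ p) ^ (1/p)
      ≤ obj p c ε Z Y W2 ^ (1/p) :=
    Real.rpow_le_rpow (Finset.sum_nonneg fun s _ =>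
        Real.rpow_nonneg (hv s) _)
      (sum_v_pow_le hp hc hε h1 h2) hq0
  linarith

/-- General metric result for any suitable family of feasible sets. -/
lemma gospa_metric_general
    (F : ∀ nX nY : ℕ, Set (Matrix (Fin (nX+1)) (Fin (nY+1)) ℝ))
    (hsub : ∀ nX nY, F nX nY ⊆ WbarSet nX nY)
    (hcompact : ∀ nX nY, IsCompact (F nX nY))
    (hFne : ∀ nX nY, (F nX nY).Nonempty)
    (htrans : ∀ (nX nY) (W : Matrix (Fin (nX+1)) (Fin (nY+1)) ℝ),
      W ∈ F nX nY → Wᵀ ∈ F nY nX)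
    (hpermF : ∀ (nX nY) (e : Fin nX ≃ Fin nY), permW (⇑e) ∈ F nX nY)
    (hcomp : ∀ (nX nZ nY) (W1 : Matrix (Fin (nX+1)) (Fin (nZ+1)) ℝ)
      (W2 : Matrix (Fin (nZ+1)) (Fin (nY+1)) ℝ),
      W1 ∈ F nX nZ → W2 ∈ F nZ nY → compW W1 W2 ∈ F nX nY)
    {p c ε : ℝ} (hp : 1 ≤ p) (hc : 0 < c) (hε : 0 < ε) :
    (∀ X Y : WGraph 𝕏,
        sInf {v | ∃ W ∈ F X.n Y.n, v = obj p c ε X Y W} ^ (1/p) = 0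
          ↔ WGraphEq X Y) ∧
    (∀ X Y : WGraph 𝕏,
        sInf {v | ∃ W ∈ F X.n Y.n, v = obj p c ε X Y W} ^ (1/p)
          = sInf {v | ∃ W ∈ F Y.n X.n, v = obj p c ε Y X W} ^ (1/p)) ∧
    (∀ X Y Z : WGraph 𝕏,
        sInf {v | ∃ W ∈ F X.n Y.n, v = obj p c ε X Y W} ^ (1/p)
          ≤ sInf {v | ∃ W ∈ F X.n Z.n, v = obj p c ε X Z W} ^ (1/p)
            + sInf {v | ∃ W ∈ F Z.n Y.n, v = obj p c ε Z Y W} ^ (1/p)) := by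
  have hp0 : (0:ℝ) < p := lt_of_lt_of_le one_pos hp
  have hpne : p ≠ 0 := hp0.ne'
  have hqne : (1/p) ≠ 0 := one_div_ne_zero hpne
  have hq0 : (0:ℝ) ≤ 1/p := by positivity
  have hlb : ∀ X Y : WGraph 𝕏,
      ∀ v ∈ {v | ∃ W ∈ F X.n Y.n, v = obj p c ε X Y W}, (0:ℝ) ≤ v := by
    rintro X Y v ⟨W, hW, rfl⟩
    exact obj_nonneg hp0 hc.le hε.le X Y (hsub _ _ hW).1
  have hminspec : ∀ X Y : WGraph 𝕏, ∃ W ∈ F X.n Y.n,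
      sInf {v | ∃ W' ∈ F X.n Y.n, v = obj p c ε X Y W'} = obj p c ε X Y W ∧
      ∀ W' ∈ F X.n Y.n, obj p c ε X Y W ≤ obj p c ε X Y W' := fun X Y =>
    sInf_spec (hcompact X.n Y.n) (hFne X.n Y.n) (continuous_obj p c ε X Y)
  have hnonneg : ∀ X Y : WGraph 𝕏,
      0 ≤ sInf {v | ∃ W ∈ F X.n Y.n, v = obj p c ε X Y W} := by
    intro X Y
    obtain ⟨W, hW, heq, _⟩ := hminspec X Y
    rw [heq]
    exact obj_nonneg hp0 hc.le hε.le X Y (hsub _ _ hW).1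
  refine ⟨?_, ?_, ?_⟩
  · -- identity
    intro X Y
    constructor
    · intro h
      have hzero : sInf {v | ∃ W ∈ F X.n Y.n, v = obj p c ε X Y W} = 0 :=
        (Real.rpow_eq_zero (hnonneg X Y) hqne).mp h
      obtain ⟨W, hW, heq, _⟩ := hminspec X Y
      rw [heq] at hzero
      exact wgraphEq_of_obj_zero hp hc hε (hsub _ _ hW) hzero
    · intro h
      obtain ⟨e, hnodes, hA⟩ := equiv_of_wgraphEq h
      have hobj0 : obj p c ε X Y (permW (⇑e)) = 0 :=
        obj_permW_zero hp0 X Y e hnodes hA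
      have hmem : (0:ℝ) ∈ {v | ∃ W ∈ F X.n Y.n, v = obj p c ε X Y W} :=
        ⟨permW (⇑e), hpermF X.n Y.n e, hobj0.symm⟩
      have hle : sInf {v | ∃ W ∈ F X.n Y.n, v = obj p c ε X Y W} ≤ 0 :=
        csInf_le_of_mem (hlb X Y) hmem
      have : sInf {v | ∃ W ∈ F X.n Y.n, v = obj p c ε X Y W} = 0 :=
        le_antisymm hle (hnonneg X Y)
      rw [this, Real.zero_rpow hqne]
  · -- symmetry
    intro X Y
    have hsets : {v | ∃ W ∈ F X.n Y.n, v = obj p c ε X Y W}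
        = {v | ∃ W ∈ F Y.n X.n, v = obj p c ε Y X W} := by
      ext v
      constructor
      · rintro ⟨W, hW, rfl⟩
        exact ⟨Wᵀ, htrans _ _ W hW, (obj_transpose p c ε X Y W).symm⟩
      · rintro ⟨V, hV, rfl⟩
        exact ⟨Vᵀ, htrans _ _ V hV, (obj_transpose p c ε Y X V).symm⟩
    rw [hsets]
  · -- triangle
    intro X Y Z
    obtain ⟨W1, hW1, heq1, _⟩ := hminspec X Z
    obtain ⟨W2, hW2, heq2, _⟩ := hminspec Z Y
    have hmem : obj p c ε X Y (compW W1 W2)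
        ∈ {v | ∃ W ∈ F X.n Y.n, v = obj p c ε X Y W} :=
      ⟨compW W1 W2, hcomp _ _ _ W1 W2 hW1 hW2, rfl⟩
    have hle : sInf {v | ∃ W ∈ F X.n Y.n, v = obj p c ε X Y W}
        ≤ obj p c ε X Y (compW W1 W2) := csInf_le_of_mem (hlb X Y) hmem
    calc sInf {v | ∃ W ∈ F X.n Y.n, v = obj p c ε X Y W} ^ (1/p)
        ≤ obj p c ε X Y (compW W1 W2) ^ (1/p) :=
          Real.rpow_le_rpow (hnonneg X Y) hle hq0
      _ ≤ obj p c ε X Z W1 ^ (1/p) + obj p c ε Z Y W2 ^ (1/p) :=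
          obj_comp_le hp hc hε (hsub _ _ hW1) (hsub _ _ hW2)
      _ = sInf {v | ∃ W ∈ F X.n Z.n, v = obj p c ε X Z W} ^ (1/p)
          + sInf {v | ∃ W ∈ F Z.n Y.n, v = obj p c ε Z Y W} ^ (1/p) := by
          rw [heq1, heq2]

end Aux

/-- For `1 ≤ p < ∞`, `c > 0`, `ε > 0` and base metric `d`, the graph
GOSPA distance `d^{(c,ε)}` and its LP relaxation `d̄^{(c,ε)}` are metrics on the space
of weighted undirected graphs (with possible self-loops): each satisfies identity,
symmetry and the triangle inequality. -/
theorem weighted_graph_gospa_is_metric (p c ε : ℝ) (hp : 1 ≤ p) (hc : 0 < c)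
    (hε : 0 < ε) :
    ((∀ X Y : WGraph 𝕏, gospa p c ε X Y = 0 ↔ WGraphEq X Y) ∧
     (∀ X Y : WGraph 𝕏, gospa p c ε X Y = gospa p c ε Y X) ∧
     (∀ X Y Z : WGraph 𝕏,
        gospa p c ε X Y ≤ gospa p c ε X Z + gospa p c ε Z Y)) ∧
    ((∀ X Y : WGraph 𝕏, gospaLP p c ε X Y = 0 ↔ WGraphEq X Y) ∧
     (∀ X Y : WGraph 𝕏, gospaLP p c ε X Y = gospaLP p c ε Y X) ∧
     (∀ X Y Z : WGraph 𝕏,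
        gospaLP p c ε X Y ≤ gospaLP p c ε X Z + gospaLP p c ε Z Y)) := by
  constructor
  · have := gospa_metric_general (𝕏 := 𝕏) (fun nX nY => Wset nX nY)
      (fun nX nY => Wset_subset) (fun nX nY => wset_compact nX nY)
      (fun nX nY => ⟨W0 nX nY, W0_mem nX nY⟩)
      (fun nX nY W hW => transpose_mem_wset hW)
      (fun nX nY e => permW_mem e)
      (fun nX nZ nY W1 W2 h1 h2 => compW_mem_wset W1 W2 h1 h2)
      hp hc hε
    exact this
  · have := gospa_metric_general (𝕏 := 𝕏) (fun nX nY => WbarSet nX nY)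
      (fun nX nY => le_refl _) (fun nX nY => wbar_compact nX nY)
      (fun nX nY => ⟨W0 nX nY, Wset_subset (W0_mem nX nY)⟩)
      (fun nX nY W hW => transpose_mem_wbar hW)
      (fun nX nY e => Wset_subset (permW_mem e))
      (fun nX nZ nY W1 W2 h1 h2 => compW_mem_wbar W1 W2 h1 h2)
      hp hc hε
    exact this

end GraphGOSPA
end

section
/- For binary assignment matrices, the 1-norm edge cost counts edge mismatches and half-edges: for every W ∈ 𝒲_{X,Y} corresponding to the assignment vector π ∈ Π_{V_X,V_Y} under the canonical bijection, ‖A_X W' − W' A_Y‖ = Σ_{i,j: π_i>0, π_j>0} |A_X(i,j) − A_Y(π_i,π_j)| + Σ_{i: π_i=0} Σ_{j: π_j>0} A_X(i,j) + Σ_{i∉range(π)} Σ_{j∈range(π)} A_Y(i,j), where the first sum is over ordered pairs (i,j) with i,j ≤ n_X. -/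
open scoped BigOperators Matrix

namespace GraphGOSPA

/-- An undirected unweighted graph with node attributes in a type `𝕏`:
a finite list of distinct nodes together with a symmetric `{0,1}`-valued
adjacency matrix with zero diagonal. -/
structure Graph (𝕏 : Type*) where
  n : ℕ
  nodes : Fin n → 𝕏
  nodes_inj : Function.Injective nodes
  A : Matrix (Fin n) (Fin n) ℝ
  A_symm : A.IsSymm
  A_01 : ∀ i j, A i j = 0 ∨ A i j = 1
  A_diag : ∀ i, A i i = 0

variable {𝕏 : Type*}

/-- The set `Π_{V_X,V_Y}` of assignment vectors: `π i = some j` means node `i` of `X`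
is assigned to node `j` of `Y` (`π_i = j > 0` in the paper), and `π i = none` means
node `i` is unassigned (`π_i = 0`); two different nodes cannot be assigned to the
same node of `Y`. -/
def AssignSet (nX nY : ℕ) : Set (Fin nX → Option (Fin nY)) :=
  {π | ∀ ⦃i i' : Fin nX⦄ ⦃j : Fin nY⦄, π i = some j → π i' = some j → i = i'}

/-- The canonical bijection from assignment vectors to binary assignment matrices:
`W(i,j) = 1` iff `π_i = j > 0` (for `i ≤ n_X`, `j ≤ n_Y`), `W(i, n_Y+1) = 1` iff
`π_i = 0`, `W(n_X+1, j) = 1` iff no `i` has `π_i = j`, and all other entries zero. -/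
noncomputable def toW {nX nY : ℕ} (π : Fin nX → Option (Fin nY)) :
    Matrix (Fin (nX+1)) (Fin (nY+1)) ℝ :=
  fun i j =>
    if hi : (i : ℕ) < nX then
      if hj : (j : ℕ) < nY then
        if π ⟨i, hi⟩ = some ⟨j, hj⟩ then 1 else 0
      else
        if π ⟨i, hi⟩ = none then 1 else 0
    else
      if hj : (j : ℕ) < nY then
        if ∀ i' : Fin nX, π i' ≠ some ⟨j, hj⟩ then 1 else 0
      else 0

section Aux

variable {nX nY : ℕ} (π : Fin nX → Option (Fin nY))

lemma topLeft_toW (i : Fin nX) (j : Fin nY) :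
    topLeft (toW π) i j = if π i = some j then 1 else 0 := by
  have hi : ((i.castSucc : Fin (nX+1)) : ℕ) < nX := i.isLt
  have hj : ((j.castSucc : Fin (nY+1)) : ℕ) < nY := j.isLt
  simp only [topLeft, toW, dif_pos hi, dif_pos hj, Fin.coe_castSucc, Fin.eta, i.isLt, j.isLt, dite_true]

lemma sum_ite_eq_dite (hπ : π ∈ AssignSet nX nY) (g : Fin nX → ℝ) (j' : Fin nY) :
    (∑ j, if π j = some j' then g j else 0) =
      if h : ∃ l, π l = some j' then g h.choose else 0 := by
  by_cases h : ∃ l, π l = some j'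
  · rw [dif_pos h, Finset.sum_eq_single h.choose]
    · rw [if_pos h.choose_spec]
    · intro b _ hb
      exact if_neg fun hb' => hb (hπ hb' h.choose_spec)
    · intro hb; exact absurd (Finset.mem_univ _) hb
  · rw [dif_neg h]
    exact Finset.sum_eq_zero fun j _ => if_neg fun hj => h ⟨j, hj⟩

lemma reindex (hπ : π ∈ AssignSet nX nY) (g : Fin nX → Fin nY → ℝ) :
    (∑ j, (π j).elim 0 (g j)) =
      ∑ j' : Fin nY, if h : ∃ l, π l = some j' then g h.choose j' else 0 := by
  have step : ∀ j : Fin nX,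
      (π j).elim 0 (g j) = ∑ j' : Fin nY, if π j = some j' then g j j' else 0 := by
    intro j
    cases hj : π j with
    | none => simp
    | some pj => simp [Finset.sum_ite_eq Finset.univ pj]
  rw [Finset.sum_congr rfl (fun j _ => step j), Finset.sum_comm]
  exact Finset.sum_congr rfl fun j' _ => sum_ite_eq_dite π hπ (fun j => g j j') j'

end Aux


section Aux2

variable {nX nY : ℕ} (π : Fin nX → Option (Fin nY))

lemma mulA_apply (hπ : π ∈ AssignSet nX nY) (A : Matrix (Fin nX) (Fin nX) ℝ)
    (i : Fin nX) (j' : Fin nY) :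
    (A * topLeft (toW π)) i j' = if h : ∃ l, π l = some j' then A i h.choose else 0 := by
  rw [Matrix.mul_apply, ← sum_ite_eq_dite π hπ (fun k => A i k) j']
  refine Finset.sum_congr rfl fun k _ => ?_
  rw [topLeft_toW]
  split <;> simp

lemma mulB_apply (B : Matrix (Fin nY) (Fin nY) ℝ) (i : Fin nX) (j' : Fin nY) :
    (topLeft (toW π) * B) i j' = (π i).elim 0 (fun pi => B pi j') := by
  rw [Matrix.mul_apply]
  cases hi : π i with
  | none => simp [topLeft_toW, hi]
  | some pi => simp [topLeft_toW, hi, ite_mul, Finset.sum_ite_eq]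

end Aux2

/-- For binary assignment matrices, the 1-norm edge cost counts edge
mismatches and half-edges: for every `W ∈ 𝒲_{X,Y}` corresponding to the assignment
vector `π ∈ Π_{V_X,V_Y}` under the canonical bijection,
`‖A_X W' − W' A_Y‖` equals the sum over ordered pairs of assigned nodes of
`|A_X(i,j) − A_Y(π_i,π_j)|`, plus the half-edge terms `Σ_{π_i=0}Σ_{π_j>0} A_X(i,j)`
and `Σ_{i∉range(π)}Σ_{j∈range(π)} A_Y(i,j)`. -/
theorem onorm_edge_cost_eq (X Y : Graph 𝕏) (π : Fin X.n → Option (Fin Y.n))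
    (hπ : π ∈ AssignSet X.n Y.n) :
    onorm (X.A * topLeft (toW π) - topLeft (toW π) * Y.A) =
      (∑ i, ∑ j, (π i).elim 0 fun pi => (π j).elim 0 fun pj =>
        |X.A i j - Y.A pi pj|)
      + (∑ i, ∑ j, if (π i).isNone ∧ (π j).isSome then X.A i j else 0)
      + (∑ i', ∑ j', if (∀ l, π l ≠ some i') ∧ (∃ l, π l = some j')
          then Y.A i' j' else 0) := by
  classical
  have hXnn : ∀ a b, (0:ℝ) ≤ X.A a b := fun a b => by
    rcases X.A_01 a b with h | h <;> rw [h] <;> norm_num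
  have hYnn : ∀ a b, (0:ℝ) ≤ Y.A a b := fun a b => by
    rcases Y.A_01 a b with h | h <;> rw [h] <;> norm_num
  have hL : onorm (X.A * topLeft (toW π) - topLeft (toW π) * Y.A) =
      ∑ i, ∑ j' : Fin Y.n,
        |(if h : ∃ l, π l = some j' then X.A i h.choose else 0)
          - (π i).elim 0 (fun pi => Y.A pi j')| := by
    unfold onorm
    refine Finset.sum_congr rfl fun i _ => Finset.sum_congr rfl fun j' _ => ?_
    rw [Matrix.sub_apply, mulA_apply π hπ, mulB_apply]
  have hS1 : (∑ i, ∑ j, (π i).elim 0 fun pi => (π j).elim 0 fun pj =>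
        |X.A i j - Y.A pi pj|)
      = ∑ i, ∑ j' : Fin Y.n, (if h : ∃ l, π l = some j' then
          (π i).elim 0 fun pi => |X.A i h.choose - Y.A pi j'| else 0) := by
    refine Finset.sum_congr rfl fun i _ => ?_
    cases hi : π i with
    | none => simp [hi]
    | some pi =>
      simp only [hi, Option.elim_some]
      exact reindex π hπ (fun j pj => |X.A i j - Y.A pi pj|)
  have hS2 : (∑ i, ∑ j, if (π i).isNone ∧ (π j).isSome then X.A i j else 0)
      = ∑ i, ∑ j' : Fin Y.n, (if h : ∃ l, π l = some j' then
          (if (π i).isNone then X.A i h.choose else 0) else 0) := by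
    refine Finset.sum_congr rfl fun i _ => ?_
    cases hi : π i with
    | some pi => simp [hi]
    | none =>
      simp only [hi, Option.isNone_none, true_and, if_true]
      have e1 : ∀ j : Fin X.n, (if (π j).isSome then X.A i j else 0)
          = (π j).elim 0 (fun _ => X.A i j) := by
        intro j; cases hj : π j <;> simp [hj]
      rw [Finset.sum_congr rfl (fun j _ => e1 j),
        reindex π hπ (fun j _ => X.A i j)]
  have hS3 : (∑ i', ∑ j', if (∀ l, π l ≠ some i') ∧ (∃ l, π l = some j')
          then Y.A i' j' else 0)
      = ∑ i, ∑ j' : Fin Y.n, (if (∀ l, π l ≠ some j')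
          then (π i).elim 0 fun pi => Y.A pi j' else 0) := by
    calc (∑ i', ∑ j', if (∀ l, π l ≠ some i') ∧ (∃ l, π l = some j')
          then Y.A i' j' else 0)
        = ∑ j' : Fin Y.n, ∑ b : Fin Y.n, (if (∀ l, π l ≠ some j') then
            (if h : ∃ l, π l = some b then Y.A b j' else 0) else 0) := by
          refine Finset.sum_congr rfl fun j' _ => Finset.sum_congr rfl fun b _ => ?_
          have hsym : Y.A j' b = Y.A b j' := by
            conv_lhs => rw [← Y.A_symm]
            rfl
          by_cases h1 : ∀ l, π l ≠ some j' <;> by_cases h2 : ∃ l, π l = some b <;>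
            simp [h1, h2, hsym]
      _ = ∑ j' : Fin Y.n, (if (∀ l, π l ≠ some j') then
            ∑ b : Fin Y.n, (if h : ∃ l, π l = some b then Y.A b j' else 0) else 0) := by
          refine Finset.sum_congr rfl fun j' _ => ?_
          by_cases h1 : ∀ l, π l ≠ some j' <;> simp [h1]
      _ = ∑ j' : Fin Y.n, (if (∀ l, π l ≠ some j')
            then ∑ i, (π i).elim 0 fun pi => Y.A pi j' else 0) := by
          refine Finset.sum_congr rfl fun j' _ => ?_
          rw [reindex π hπ (fun _ pj => Y.A pj j')]
      _ = ∑ i, ∑ j' : Fin Y.n, (if (∀ l, π l ≠ some j')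
            then (π i).elim 0 fun pi => Y.A pi j' else 0) := by
          rw [Finset.sum_comm]
          refine Finset.sum_congr rfl fun j' _ => ?_
          by_cases h1 : ∀ l, π l ≠ some j' <;> simp [h1]
  rw [hL, hS1, hS2, hS3]
  have key : ∀ (i : Fin X.n) (j' : Fin Y.n),
      |(if h : ∃ l, π l = some j' then X.A i h.choose else 0)
          - (π i).elim 0 (fun pi => Y.A pi j')|
        = (if h : ∃ l, π l = some j' then
            (π i).elim 0 fun pi => |X.A i h.choose - Y.A pi j'| else 0)
          + (if h : ∃ l, π l = some j' then
            (if (π i).isNone then X.A i h.choose else 0) else 0)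
          + (if (∀ l, π l ≠ some j')
            then (π i).elim 0 fun pi => Y.A pi j' else 0) := by
    intro i j'
    by_cases h : ∃ l, π l = some j'
    · have h' : ¬ (∀ l, π l ≠ some j') := by push_neg; exact h
      cases hi : π i with
      | none => simp [h, hi, h', abs_of_nonneg (hXnn i h.choose)]
      | some pi => simp [h, hi, h']
    · have h' : ∀ l, π l ≠ some j' := not_exists.mp h
      cases hi : π i with
      | none => simp [h, hi, h']
      | some pi => simp [h, hi, h', abs_of_nonneg (hYnn pi j')]
  calc (∑ i, ∑ j' : Fin Y.n,
        |(if h : ∃ l, π l = some j' then X.A i h.choose else 0)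
          - (π i).elim 0 (fun pi => Y.A pi j')|)
      = ∑ i, ∑ j' : Fin Y.n,
        ((if h : ∃ l, π l = some j' then
            (π i).elim 0 fun pi => |X.A i h.choose - Y.A pi j'| else 0)
          + (if h : ∃ l, π l = some j' then
            (if (π i).isNone then X.A i h.choose else 0) else 0)
          + (if (∀ l, π l ≠ some j')
            then (π i).elim 0 fun pi => Y.A pi j' else 0)) := by
        exact Finset.sum_congr rfl fun i _ => Finset.sum_congr rfl fun j' _ => key i j'
    _ = _ := by simp only [Finset.sum_add_distrib]


end GraphGOSPA
end
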